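/- arXiv:1405.1476 — 7 statements merged into one kernel-verified Lean document; each statement's English description precedes it below -/
import Mathlib

section
/- Every graph of treewidth at most 2 admits an {L}-representation, i.e., an intersection representation by axis-aligned L-shapes all of the same rotation. -/
/-!
The L-shapes are placed along the construction order of a 2-tree `H` containing `G`. Every edge
`uw` of `H` placed so far owns an axis-parallel box, disjoint from the boxes of the other edges
and from all other L-shapes, which the horizontal arm of one of `u`, `w` enters through the left
side and the vertical arm of the other through the bottom side. A vertex `v` attached to `uw` is
drawn with its corner near the lower-left corner of that box; lengthening or shortening its two
arms decides independently whether it meets `u` and whether it meets `w`, which is all the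
freedom a subgraph of `H` needs. The old box still has room for three disjoint boxes of the same
kind, for the edges `uv`, `wv` and `uw`, which restores the invariant.
-/

/-- An axis-aligned L-shape: union of a vertical segment `[(x,y),(x,y+h)]` and a
horizontal segment `[(x,y),(x+w,y)]` sharing the bottom-left endpoint `(x,y)`. -/
def LShape (x y w h : ℝ) : Set (ℝ × ℝ) :=
  segment ℝ (x, y) (x, y + h) ∪ segment ℝ (x, y) (x + w, y)

/-- `G` has an `{L}`-representation: every vertex gets an L-shape (all of the same
rotation), and two distinct vertices are adjacent iff their L-shapes intersect. -/
def HasLRep {V : Type*} (G : SimpleGraph V) : Prop :=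
  ∃ p : V → ℝ × ℝ × ℝ × ℝ,
    (∀ v, 0 < (p v).2.2.1 ∧ 0 < (p v).2.2.2) ∧
    ∀ u v : V, u ≠ v →
      (G.Adj u v ↔
        (LShape (p u).1 (p u).2.1 (p u).2.2.1 (p u).2.2.2 ∩
          LShape (p v).1 (p v).2.1 (p v).2.2.1 (p v).2.2.2).Nonempty)

/-- `IsKTreeBase k b G`: the vertices of `G` can be linearly ordered so that the first
`b` vertices form a clique, and every later vertex `v` has exactly `k` earlier
neighbours, which form a `k`-clique of `G`.  With `k = 3`, `b = 4` this is the
recursive definition of a 3-tree (start from `K₄`, repeatedly add a vertex whose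
neighbourhood is a triangle); with `k = 2`, `b = 2` it is the definition of a 2-tree
built from an edge. -/
def IsKTreeBase (k b : ℕ) {V : Type*} (G : SimpleGraph V) : Prop :=
  b ≤ Nat.card V ∧
  ∃ r : V ≃ Fin (Nat.card V),
    (∀ u v : V, u ≠ v → (r u : ℕ) < b → (r v : ℕ) < b → G.Adj u v) ∧
    (∀ v : V, b ≤ (r v : ℕ) → ∃ S : Finset V,
      S.card = k ∧ (∀ u ∈ S, (r u : ℕ) < (r v : ℕ)) ∧
      (∀ a ∈ S, ∀ c ∈ S, a ≠ c → G.Adj a c) ∧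
      (∀ u : V, (r u : ℕ) < (r v : ℕ) → (G.Adj u v ↔ u ∈ S)))

/-- A 3-tree: obtained from `K₄` by repeatedly adding a vertex adjacent to the three
vertices of an existing triangle. -/
def IsThreeTree {V : Type*} (G : SimpleGraph V) : Prop :=
  IsKTreeBase 3 4 G

open Set Function

namespace LRep

structure PlacedL where
  x : ℝ
  y : ℝ
  w : ℝ
  h : ℝ
  w_pos : 0 < w
  h_pos : 0 < h

namespace PlacedL

variable (a b : PlacedL)

def carrier : Set (ℝ × ℝ) := LShape a.x a.y a.w a.h

theorem mem_carrier {z : ℝ × ℝ} : z ∈ a.carrier ↔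
    (z.1 = a.x ∧ a.y ≤ z.2 ∧ z.2 ≤ a.y + a.h) ∨ (z.2 = a.y ∧ a.x ≤ z.1 ∧ z.1 ≤ a.x + a.w) := by
  rw [carrier, LShape, ← Prod.image_mk_segment_right, ← Prod.image_mk_segment_left,
    segment_eq_Icc (by linarith [a.h_pos]), segment_eq_Icc (by linarith [a.w_pos])]
  obtain ⟨z₁, z₂⟩ := z
  aesop

theorem inter_carrier_nonempty_iff : (a.carrier ∩ b.carrier).Nonempty ↔
    (a.x = b.x ∧ b.y ≤ a.y + a.h ∧ a.y ≤ b.y + b.h) ∨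
    (a.y = b.y ∧ b.x ≤ a.x + a.w ∧ a.x ≤ b.x + b.w) ∨
    (b.x ≤ a.x ∧ a.x ≤ b.x + b.w ∧ a.y ≤ b.y ∧ b.y ≤ a.y + a.h) ∨
    (a.x ≤ b.x ∧ b.x ≤ a.x + a.w ∧ b.y ≤ a.y ∧ a.y ≤ b.y + b.h) := by
  have := a.w_pos; have := a.h_pos; have := b.w_pos; have := b.h_pos
  constructor
  · rintro ⟨z, ha, hb⟩
    rw [mem_carrier] at ha hb
    rcases ha with ⟨_, _, _⟩ | ⟨_, _, _⟩ <;> rcases hb with ⟨_, _, _⟩ | ⟨_, _, _⟩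
    · exact Or.inl ⟨by linarith, by linarith, by linarith⟩
    · exact Or.inr <| Or.inr <| Or.inl ⟨by linarith, by linarith, by linarith, by linarith⟩
    · exact Or.inr <| Or.inr <| Or.inr ⟨by linarith, by linarith, by linarith, by linarith⟩
    · exact Or.inr <| Or.inl ⟨by linarith, by linarith, by linarith⟩
  · rintro (⟨hx, h₁, h₂⟩ | ⟨hy, h₁, h₂⟩ | ⟨h₁, h₂, h₃, h₄⟩ | ⟨h₁, h₂, h₃, h₄⟩)
    · exact ⟨(a.x, max a.y b.y),
        (mem_carrier a).2 (Or.inl ⟨rfl, le_max_left .., max_le (by linarith) h₁⟩),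
        (mem_carrier b).2 (Or.inl ⟨hx, le_max_right .., max_le h₂ (by linarith)⟩)⟩
    · exact ⟨(max a.x b.x, a.y),
        (mem_carrier a).2 (Or.inr ⟨rfl, le_max_left .., max_le (by linarith) h₁⟩),
        (mem_carrier b).2 (Or.inr ⟨hy, le_max_right .., max_le h₂ (by linarith)⟩)⟩
    · exact ⟨(a.x, b.y), (mem_carrier a).2 (Or.inl ⟨rfl, h₃, h₄⟩),
        (mem_carrier b).2 (Or.inr ⟨rfl, h₁, h₂⟩)⟩
    · exact ⟨(b.x, a.y), (mem_carrier a).2 (Or.inr ⟨rfl, h₁, h₂⟩),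
        (mem_carrier b).2 (Or.inl ⟨rfl, h₃, h₄⟩)⟩

end PlacedL

structure Box where
  x₀ : ℝ
  x₁ : ℝ
  y₀ : ℝ
  y₁ : ℝ

namespace Box

def toSet (k : Box) : Set (ℝ × ℝ) := Icc k.x₀ k.x₁ ×ˢ Icc k.y₀ k.y₁

theorem toSet_subset_toSet {k k' : Box} (hx₀ : k'.x₀ ≤ k.x₀) (hx₁ : k.x₁ ≤ k'.x₁)
    (hy₀ : k'.y₀ ≤ k.y₀) (hy₁ : k.y₁ ≤ k'.y₁) : k.toSet ⊆ k'.toSet :=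
  prod_mono (Icc_subset_Icc hx₀ hx₁) (Icc_subset_Icc hy₀ hy₁)

theorem disjoint_toSet {k k' : Box} (h : k.x₁ < k'.x₀ ∨ k.y₁ < k'.y₀) :
    Disjoint k.toSet k'.toSet := by
  rw [toSet, toSet, disjoint_prod]
  refine h.imp (fun h => ?_) (fun h => ?_) <;>
    exact disjoint_left.2 fun z hz hz' => by linarith [hz.2, hz'.1]

end Box

namespace PlacedL

variable {a : PlacedL} {k : Box}

theorem carrier_subset_toSet (hx₀ : k.x₀ ≤ a.x) (hx₁ : a.x + a.w ≤ k.x₁) (hy₀ : k.y₀ ≤ a.y)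
    (hy₁ : a.y + a.h ≤ k.y₁) : a.carrier ⊆ k.toSet := by
  have := a.w_pos; have := a.h_pos
  intro z hz
  rcases (mem_carrier a).1 hz with ⟨_, _, _⟩ | ⟨_, _, _⟩ <;>
    exact ⟨⟨by linarith, by linarith⟩, by linarith, by linarith⟩

theorem disjoint_carrier_toSet (hx : a.x < k.x₀ ∨ k.x₁ < a.x) (hy : a.y < k.y₀ ∨ k.y₁ < a.y) :
    Disjoint a.carrier k.toSet := by
  refine disjoint_left.2 fun z hz ⟨⟨_, _⟩, _, _⟩ => ?_
  rcases (mem_carrier a).1 hz with ⟨_, _, _⟩ | ⟨_, _, _⟩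
  · rcases hx with _ | _ <;> linarith
  · rcases hy with _ | _ <;> linarith

end PlacedL

/-- `a`'s horizontal arm enters the box `k` through its left side, `b`'s vertical arm through its
bottom side. -/
def Entering (a b : PlacedL) (k : Box) : Prop :=
  a.x < k.x₀ ∧ k.x₀ < a.x + a.w ∧ k.y₀ < a.y ∧ a.y < k.y₁ ∧
    b.y < k.y₀ ∧ k.y₀ < b.y + b.h ∧ k.x₀ < b.x ∧ b.x < k.x₁

def Crossing (a b : PlacedL) (k : Box) : Prop := Entering a b k ∨ Entering b a k

theorem Crossing.symm {a b : PlacedL} {k : Box} (h : Crossing a b k) : Crossing b a k :=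
  Or.symm h

structure IsInsertion (a b q : PlacedL) (k kaq kbq kab : Box) : Prop where
  carrier_subset : q.carrier ⊆ k.toSet
  crossing_aq : Crossing a q kaq
  crossing_bq : Crossing b q kbq
  crossing_ab : Crossing a b kab
  kaq_subset : kaq.toSet ⊆ k.toSet
  kbq_subset : kbq.toSet ⊆ k.toSet
  kab_subset : kab.toSet ⊆ k.toSet
  disjoint_kaq_kbq : Disjoint kaq.toSet kbq.toSet
  disjoint_kaq_kab : Disjoint kaq.toSet kab.toSet
  disjoint_kbq_kab : Disjoint kbq.toSet kab.toSet
  disjoint_a_kbq : Disjoint a.carrier kbq.toSet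
  disjoint_b_kaq : Disjoint b.carrier kaq.toSet
  disjoint_q_kab : Disjoint q.carrier kab.toSet

theorem IsInsertion.swap {a b q : PlacedL} {k kaq kbq kab : Box}
    (h : IsInsertion a b q k kaq kbq kab) : IsInsertion b a q k kbq kaq kab :=
  ⟨h.carrier_subset, h.crossing_bq, h.crossing_aq, h.crossing_ab.symm, h.kbq_subset, h.kaq_subset,
    h.kab_subset, h.disjoint_kaq_kbq.symm, h.disjoint_kbq_kab, h.disjoint_kaq_kab,
    h.disjoint_b_kaq, h.disjoint_a_kbq, h.disjoint_q_kab⟩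

theorem Entering.inter_carrier_nonempty_iff_of_corner {a b q : PlacedL} {k : Box}
    (hk : Entering a b k) (hx₀ : k.x₀ < q.x) (hxa : q.x ≤ a.x + a.w) (hxb : q.x < b.x)
    (hy₀ : k.y₀ < q.y) (hya : q.y < a.y) (hyb : q.y ≤ b.y + b.h) :
    ((q.carrier ∩ a.carrier).Nonempty ↔ a.y ≤ q.y + q.h) ∧
      ((q.carrier ∩ b.carrier).Nonempty ↔ b.x ≤ q.x + q.w) := by
  obtain ⟨hax, -, -, -, hby, -, -, -⟩ := hk
  simp only [PlacedL.inter_carrier_nonempty_iff]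
  constructor <;> constructor
  · rintro (⟨h, -⟩ | ⟨h, -⟩ | ⟨-, -, -, h⟩ | ⟨h, -⟩) <;> linarith
  · exact fun h => Or.inr <| Or.inr <| Or.inl ⟨by linarith, hxa, hya.le, h⟩
  · rintro (⟨h, -⟩ | ⟨h, -⟩ | ⟨h, -⟩ | ⟨-, h, -⟩) <;> linarith
  · exact fun h => Or.inr <| Or.inr <| Or.inr ⟨hxb.le, h, by linarith, hyb⟩

theorem Entering.exists_insertion {a b : PlacedL} {k : Box} (hk : Entering a b k) (sa sb : Prop) :
    ∃ q kaq kbq kab, IsInsertion a b q k kaq kbq kab ∧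
      ((q.carrier ∩ a.carrier).Nonempty ↔ sa) ∧ ((q.carrier ∩ b.carrier).Nonempty ↔ sb) := by
  have ⟨hax, hax', hay, hay', hby, hby', hbx, hbx'⟩ := hk
  have := a.w_pos; have := a.h_pos; have := b.w_pos; have := b.h_pos
  -- `[x₀, X] × [y₀, Y]` is the part of `k` below `a` and left of `b`; everything new is laid out
  -- on a grid of tenths of it, except the arms of `q` that are to reach `a` or `b`.
  obtain ⟨X, hX₀, hX₁, hXb, hXa⟩ : ∃ X, k.x₀ < X ∧ X ≤ k.x₁ ∧ X ≤ b.x ∧ X ≤ a.x + a.w :=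
    ⟨min k.x₁ (min b.x (a.x + a.w)), lt_min (hbx.trans hbx') (lt_min hbx hax'), min_le_left _ _,
      (min_le_right _ _).trans (min_le_left _ _), (min_le_right _ _).trans (min_le_right _ _)⟩
  obtain ⟨Y, hY₀, hY₁, hYa, hYb⟩ : ∃ Y, k.y₀ < Y ∧ Y ≤ k.y₁ ∧ Y ≤ a.y ∧ Y ≤ b.y + b.h :=
    ⟨min k.y₁ (min a.y (b.y + b.h)), lt_min (hay.trans hay') (lt_min hay hby'), min_le_left _ _,
      (min_le_right _ _).trans (min_le_left _ _), (min_le_right _ _).trans (min_le_right _ _)⟩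
  set d := (X - k.x₀) / 10 with hd
  set e := (Y - k.y₀) / 10 with he
  obtain ⟨xe, hxe₀, hxe₁, hxe⟩ : ∃ xe, k.x₀ + 4 * d ≤ xe ∧ xe < k.x₁ ∧ (b.x ≤ xe ↔ sb) := by
    by_cases h : sb
    · exact ⟨(b.x + k.x₁) / 2, by linarith, by linarith, iff_of_true (by linarith) h⟩
    · exact ⟨k.x₀ + 4 * d, le_rfl, by linarith, iff_of_false (by linarith) h⟩
  obtain ⟨ye, hye₀, hye₁, hye⟩ : ∃ ye, k.y₀ + 6 * e ≤ ye ∧ ye < k.y₁ ∧ (a.y ≤ ye ↔ sa) := by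
    by_cases h : sa
    · exact ⟨(a.y + k.y₁) / 2, by linarith, by linarith, iff_of_true (by linarith) h⟩
    · exact ⟨k.y₀ + 6 * e, le_rfl, by linarith, iff_of_false (by linarith) h⟩
  obtain ⟨q, hqx, hqy, hqw, hqh⟩ : ∃ q : PlacedL,
      q.x = k.x₀ + 2 * d ∧ q.y = k.y₀ + 2 * e ∧ q.x + q.w = xe ∧ q.y + q.h = ye :=
    ⟨⟨k.x₀ + 2 * d, k.y₀ + 2 * e, xe - (k.x₀ + 2 * d), ye - (k.y₀ + 2 * e), by linarith,
      by linarith⟩, rfl, rfl, by ring, by ring⟩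
  obtain ⟨hqa, hqb⟩ := hk.inter_carrier_nonempty_iff_of_corner (q := q) (by linarith)
    (by linarith) (by linarith) (by linarith) (by linarith) (by linarith)
  rw [hqh, hye] at hqa
  rw [hqw, hxe] at hqb
  refine ⟨q, ⟨k.x₀ + d, k.x₀ + 5 * d, k.y₀ + 4 * e, (a.y + k.y₁) / 2⟩,
    ⟨k.x₀ + 3 * d, (b.x + k.x₁) / 2, k.y₀ + e, k.y₀ + 3 * e⟩,
    ⟨k.x₀ + 6 * d, (b.x + k.x₁) / 2, k.y₀ + 5 * e, (a.y + k.y₁) / 2⟩,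
    ⟨?_, ?_, ?_, ?_, ?_, ?_, ?_, ?_, ?_, ?_, ?_, ?_, ?_⟩, hqa, hqb⟩
  · exact PlacedL.carrier_subset_toSet (by linarith) (by linarith) (by linarith) (by linarith)
  · exact Or.inl ⟨by linarith, by linarith, by linarith, by linarith, by linarith, by linarith,
      by linarith, by linarith⟩
  · exact Or.inr ⟨by linarith, by linarith, by linarith, by linarith, by linarith, by linarith,
      by linarith, by linarith⟩
  · exact Or.inl ⟨by linarith, by linarith, by linarith, by linarith, by linarith, by linarith,
      by linarith, by linarith⟩
  · exact Box.toSet_subset_toSet (by linarith) (by linarith) (by linarith) (by linarith)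
  · exact Box.toSet_subset_toSet (by linarith) (by linarith) (by linarith) (by linarith)
  · exact Box.toSet_subset_toSet (by linarith) (by linarith) (by linarith) (by linarith)
  · exact (Box.disjoint_toSet (Or.inr (by linarith))).symm
  · exact Box.disjoint_toSet (Or.inl (by linarith))
  · exact Box.disjoint_toSet (Or.inr (by linarith))
  · exact PlacedL.disjoint_carrier_toSet (Or.inl (by linarith)) (Or.inr (by linarith))
  · exact PlacedL.disjoint_carrier_toSet (Or.inr (by linarith)) (Or.inl (by linarith))
  · exact PlacedL.disjoint_carrier_toSet (Or.inl (by linarith)) (Or.inl (by linarith))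

theorem Crossing.exists_insertion {a b : PlacedL} {k : Box} (hk : Crossing a b k) (sa sb : Prop) :
    ∃ q kaq kbq kab, IsInsertion a b q k kaq kbq kab ∧
      ((q.carrier ∩ a.carrier).Nonempty ↔ sa) ∧ ((q.carrier ∩ b.carrier).Nonempty ↔ sb) := by
  rcases hk with hk | hk
  · exact hk.exists_insertion sa sb
  · obtain ⟨q, kbq, kaq, kab, h, hb, ha⟩ := hk.exists_insertion sb sa
    exact ⟨q, kaq, kbq, kab, h.swap, ha, hb⟩

theorem exists_crossing_pair (s : Prop) :
    ∃ a b k, Crossing a b k ∧ ((a.carrier ∩ b.carrier).Nonempty ↔ s) := by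
  have h : Entering ⟨0, 1, 2, 1, two_pos, one_pos⟩ ⟨1, 0, 1, 2, one_pos, two_pos⟩
      ⟨1 / 2, 3 / 2, 1 / 2, 3 / 2⟩ := by
    norm_num [Entering]
  obtain ⟨q, kaq, _, _, hq, hqa, -⟩ := h.exists_insertion s True
  exact ⟨_, q, kaq, hq.crossing_aq, by rwa [inter_comm]⟩

section Frame

variable {V : Type*}

theorem crossing_of_mk_eq {p : V → PlacedL} {k : Box} {u w x y : V} (h : s(u, w) = s(x, y))
    (hc : Crossing (p x) (p y) k) : Crossing (p u) (p w) k := by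
  rcases Sym2.eq_iff.1 h with ⟨rfl, rfl⟩ | ⟨rfl, rfl⟩
  exacts [hc, hc.symm]

theorem _root_.SimpleGraph.edgeSet_inter_sym2_insert (H : SimpleGraph V) {P : Set V} {a b v : V}
    (ha : a ∈ P) (hb : b ∈ P) (hv : ∀ u ∈ P, H.Adj u v ↔ u = a ∨ u = b) :
    H.edgeSet ∩ (insert v P).sym2 = insert s(a, v) (insert s(b, v) (H.edgeSet ∩ P.sym2)) := by
  have hav := (hv a ha).2 (Or.inl rfl)
  have hbv := (hv b hb).2 (Or.inr rfl)
  ext e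
  induction e using Sym2.ind with | h x y => ?_
  simp only [mem_inter_iff, mem_insert_iff, mk_mem_sym2_iff, SimpleGraph.mem_edgeSet,
    Sym2.eq_iff]
  constructor
  · rintro ⟨hxy, rfl | hx, rfl | hy⟩
    · exact absurd rfl (H.ne_of_adj hxy)
    · rcases (hv y hy).1 hxy.symm with rfl | rfl <;> simp
    · rcases (hv x hx).1 hxy with rfl | rfl <;> simp
    · exact Or.inr (Or.inr ⟨hxy, hx, hy⟩)
  · rintro ((⟨rfl, rfl⟩ | ⟨rfl, rfl⟩) | (⟨rfl, rfl⟩ | ⟨rfl, rfl⟩) | ⟨hxy, hx, hy⟩)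
    · exact ⟨hav, Or.inr ha, Or.inl rfl⟩
    · exact ⟨hav.symm, Or.inl rfl, Or.inr ha⟩
    · exact ⟨hbv, Or.inr hb, Or.inl rfl⟩
    · exact ⟨hbv.symm, Or.inl rfl, Or.inr hb⟩
    · exact ⟨hxy, Or.inr hx, Or.inr hy⟩

/-- Invariant of the construction: the box `R s(u, w)` of an edge `uw` of `H` is kept free for
the vertices attached to `uw` later. -/
structure IsFrame (A H : SimpleGraph V) (P : Set V) (p : V → PlacedL) (R : Sym2 V → Box) :
    Prop where
  adj_iff : ∀ u ∈ P, ∀ w ∈ P, u ≠ w → (A.Adj u w ↔ ((p u).carrier ∩ (p w).carrier).Nonempty)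
  crossing : ∀ u w, s(u, w) ∈ H.edgeSet ∩ P.sym2 → Crossing (p u) (p w) (R s(u, w))
  disjoint_carrier :
    ∀ e ∈ H.edgeSet ∩ P.sym2, ∀ c ∈ P, c ∉ e → Disjoint (p c).carrier (R e).toSet
  pairwiseDisjoint : (H.edgeSet ∩ P.sym2).PairwiseDisjoint fun e => (R e).toSet

theorem exists_isFrame_pair {A H : SimpleGraph V} {u w : V} (huw : H.Adj u w) :
    ∃ p R, IsFrame A H {u, w} p R := by
  classical
  obtain ⟨a, b, k, hk, hab⟩ := exists_crossing_pair (A.Adj u w)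
  have hne := H.ne_of_adj huw
  have hE : H.edgeSet ∩ ({u, w} : Set V).sym2 = {s(u, w)} := by
    ext e
    induction e using Sym2.ind with | h x y => ?_
    simp only [mem_inter_iff, mk_mem_sym2_iff, mem_insert_iff, mem_singleton_iff,
      SimpleGraph.mem_edgeSet, Sym2.eq_iff]
    constructor
    · rintro ⟨hxy, rfl | rfl, rfl | rfl⟩ <;> simp_all
    · rintro (⟨rfl, rfl⟩ | ⟨rfl, rfl⟩) <;> simp [huw, huw.symm]
  obtain ⟨p, hpu, hpw⟩ : ∃ p : V → PlacedL, p u = a ∧ p w = b :=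
    ⟨update (fun _ => b) u a, update_self .., update_of_ne hne.symm ..⟩
  refine ⟨p, fun _ => k, ⟨?_, ?_, ?_, ?_⟩⟩
  · rintro x (rfl | rfl) y (rfl | rfl) hxy
    · exact absurd rfl hxy
    · rw [hpu, hpw, hab]
    · rw [hpu, hpw, inter_comm, A.adj_comm, hab]
    · exact absurd rfl hxy
  · intro x y hxy
    rw [hE, mem_singleton_iff] at hxy
    exact crossing_of_mk_eq hxy (by rwa [hpu, hpw])
  · intro e he c hc hce
    rw [hE, mem_singleton_iff] at he
    subst he
    rcases hc with rfl | rfl <;> simp at hce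
  · rw [hE]
    exact pairwiseDisjoint_singleton _ _

end Frame

section Insertion

variable {V : Type*} {A H : SimpleGraph V} {P : Set V} {p : V → PlacedL} {R : Sym2 V → Box}
  {a b v : V} {q : PlacedL} {kaq kbq kab : Box}

def refineBoxes [DecidableEq V] (R : Sym2 V → Box) (a b v : V) (kaq kbq kab : Box) :
    Sym2 V → Box :=
  update (update (update R s(a, b) kab) s(a, v) kaq) s(b, v) kbq

theorem refineBoxes_mk_av [DecidableEq V] (hab : a ≠ b) :
    refineBoxes R a b v kaq kbq kab s(a, v) = kaq := by
  rw [refineBoxes, update_of_ne (Sym2.congr_left.not.2 hab), update_self]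

theorem refineBoxes_mk_bv [DecidableEq V] : refineBoxes R a b v kaq kbq kab s(b, v) = kbq :=
  update_self ..

theorem refineBoxes_mk_ab [DecidableEq V] (hav : a ≠ v) (hbv : b ≠ v) :
    refineBoxes R a b v kaq kbq kab s(a, b) = kab := by
  rw [refineBoxes, update_of_ne (by simp [hav, hbv]), update_of_ne (by simp [hav, hbv]),
    update_self]

theorem refineBoxes_of_ne [DecidableEq V] {e : Sym2 V} (hav : e ≠ s(a, v)) (hbv : e ≠ s(b, v))
    (hab : e ≠ s(a, b)) : refineBoxes R a b v kaq kbq kab e = R e := by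
  rw [refineBoxes, update_of_ne hbv, update_of_ne hav, update_of_ne hab]

theorem ne_mk_of_mem_sym2 {e : Sym2 V} (he : e ∈ P.sym2) (hvP : v ∉ P) (x : V) : e ≠ s(x, v) :=
  ne_of_mem_of_not_mem he fun h => hvP (mk_mem_sym2_iff.1 h).2

theorem refineBoxes_subset [DecidableEq V] (hvP : v ∉ P) (ha : a ∈ P) (hb : b ∈ P)
    (hkab : kab.toSet ⊆ (R s(a, b)).toSet) :
    ∀ e ∈ P.sym2, (refineBoxes R a b v kaq kbq kab e).toSet ⊆ (R e).toSet := by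
  intro e he
  by_cases h : e = s(a, b)
  · subst h
    rwa [refineBoxes_mk_ab (ne_of_mem_of_not_mem ha hvP) (ne_of_mem_of_not_mem hb hvP)]
  · rw [refineBoxes_of_ne (ne_mk_of_mem_sym2 he hvP a) (ne_mk_of_mem_sym2 he hvP b) h]

theorem IsFrame.disjoint_refineBoxes [DecidableEq V] (hF : IsFrame A H P p R) (hvP : v ∉ P)
    (ha : a ∈ P) (hb : b ∈ P) (hab : H.Adj a b) (hkab : kab.toSet ⊆ (R s(a, b)).toSet)
    {s : Set (ℝ × ℝ)} (hs : s ⊆ (R s(a, b)).toSet) (hs' : Disjoint s kab.toSet) :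
    ∀ e ∈ H.edgeSet ∩ P.sym2, Disjoint s (refineBoxes R a b v kaq kbq kab e).toSet := by
  intro e he
  by_cases h : e = s(a, b)
  · subst h
    rwa [refineBoxes_mk_ab (ne_of_mem_of_not_mem ha hvP) (ne_of_mem_of_not_mem hb hvP)]
  · exact (hF.pairwiseDisjoint ⟨hab, mk_mem_sym2_iff.2 ⟨ha, hb⟩⟩ he (Ne.symm h)).mono hs
      (refineBoxes_subset hvP ha hb hkab e he.2)

theorem IsFrame.adj_iff_insert [DecidableEq V] (hF : IsFrame A H P p R) (hAH : A ≤ H) (hvP : v ∉ P)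
    (ha : a ∈ P) (hb : b ∈ P) (hab : H.Adj a b) (hv : ∀ u ∈ P, H.Adj u v ↔ u = a ∨ u = b)
    (hqR : q.carrier ⊆ (R s(a, b)).toSet) (hqa : (q.carrier ∩ (p a).carrier).Nonempty ↔ A.Adj a v)
    (hqb : (q.carrier ∩ (p b).carrier).Nonempty ↔ A.Adj b v) :
    ∀ u ∈ insert v P, ∀ w ∈ insert v P, u ≠ w →
      (A.Adj u w ↔ ((update p v q u).carrier ∩ (update p v q w).carrier).Nonempty) := by
  have hnew : ∀ u ∈ P, A.Adj u v ↔ ((p u).carrier ∩ q.carrier).Nonempty := by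
    intro u hu
    rw [inter_comm]
    by_cases hua : u = a
    · exact hua ▸ hqa.symm
    by_cases hub : u = b
    · exact hub ▸ hqb.symm
    have hdisj := (hF.disjoint_carrier _ ⟨hab, mk_mem_sym2_iff.2 ⟨ha, hb⟩⟩ u hu
      (by simp [Sym2.mem_iff, hua, hub])).mono_right hqR
    refine iff_of_false (fun h => ?_) ?_
    · rcases (hv u hu).1 (hAH h) with rfl | rfl <;> contradiction
    · rw [inter_comm, disjoint_iff_inter_eq_empty.1 hdisj]
      exact not_nonempty_empty
  rintro u (rfl | hu) w (rfl | hw) huw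
  · exact absurd rfl huw
  · rw [update_self, update_of_ne (ne_of_mem_of_not_mem hw hvP), A.adj_comm, inter_comm]
    exact hnew w hw
  · rw [update_self, update_of_ne (ne_of_mem_of_not_mem hu hvP)]
    exact hnew u hu
  · rw [update_of_ne (ne_of_mem_of_not_mem hu hvP), update_of_ne (ne_of_mem_of_not_mem hw hvP)]
    exact hF.adj_iff u hu w hw huw

theorem IsFrame.crossing_insert [DecidableEq V] (hF : IsFrame A H P p R) (hvP : v ∉ P)
    (ha : a ∈ P) (hb : b ∈ P) (hab : a ≠ b)
    (hq : IsInsertion (p a) (p b) q (R s(a, b)) kaq kbq kab) :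
    ∀ u w, s(u, w) ∈ insert s(a, v) (insert s(b, v) (H.edgeSet ∩ P.sym2)) →
      Crossing (update p v q u) (update p v q w) (refineBoxes R a b v kaq kbq kab s(u, w)) := by
  have hav := ne_of_mem_of_not_mem ha hvP
  have hbv := ne_of_mem_of_not_mem hb hvP
  intro u w huw
  rcases huw with h | h | ⟨huwH, h⟩
  · rw [h, refineBoxes_mk_av hab]
    refine crossing_of_mk_eq h ?_
    rw [update_self, update_of_ne hav]
    exact hq.crossing_aq
  · rw [h, refineBoxes_mk_bv]
    refine crossing_of_mk_eq h ?_
    rw [update_self, update_of_ne hbv]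
    exact hq.crossing_bq
  · obtain ⟨hu, hw⟩ := mk_mem_sym2_iff.1 h
    rw [update_of_ne (ne_of_mem_of_not_mem hu hvP), update_of_ne (ne_of_mem_of_not_mem hw hvP)]
    by_cases h' : s(u, w) = s(a, b)
    · rw [h', refineBoxes_mk_ab hav hbv]
      exact crossing_of_mk_eq h' hq.crossing_ab
    · rw [refineBoxes_of_ne (ne_mk_of_mem_sym2 h hvP a) (ne_mk_of_mem_sym2 h hvP b) h']
      exact hF.crossing u w ⟨huwH, h⟩

theorem IsFrame.disjoint_carrier_insert [DecidableEq V] (hF : IsFrame A H P p R) (hvP : v ∉ P)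
    (ha : a ∈ P) (hb : b ∈ P) (hab : H.Adj a b)
    (hq : IsInsertion (p a) (p b) q (R s(a, b)) kaq kbq kab) :
    ∀ e ∈ insert s(a, v) (insert s(b, v) (H.edgeSet ∩ P.sym2)), ∀ c ∈ insert v P, c ∉ e →
      Disjoint (update p v q c).carrier (refineBoxes R a b v kaq kbq kab e).toSet := by
  have habE : s(a, b) ∈ H.edgeSet ∩ P.sym2 := ⟨hab, mk_mem_sym2_iff.2 ⟨ha, hb⟩⟩
  rintro e (rfl | rfl | he) c hc hce
  · simp only [Sym2.mem_iff, not_or] at hce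
    have hcP := hc.resolve_left hce.2
    rw [update_of_ne hce.2, refineBoxes_mk_av (H.ne_of_adj hab)]
    by_cases hcb : c = b
    · exact hcb ▸ hq.disjoint_b_kaq
    · exact (hF.disjoint_carrier _ habE c hcP (by simp [Sym2.mem_iff, hce.1, hcb])).mono_right
        hq.kaq_subset
  · simp only [Sym2.mem_iff, not_or] at hce
    have hcP := hc.resolve_left hce.2
    rw [update_of_ne hce.2, refineBoxes_mk_bv]
    by_cases hca : c = a
    · exact hca ▸ hq.disjoint_a_kbq
    · exact (hF.disjoint_carrier _ habE c hcP (by simp [Sym2.mem_iff, hce.1, hca])).mono_right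
        hq.kbq_subset
  · rcases hc with rfl | hc
    · rw [update_self]
      exact hF.disjoint_refineBoxes hvP ha hb hab hq.kab_subset hq.carrier_subset
        hq.disjoint_q_kab e he
    · rw [update_of_ne (ne_of_mem_of_not_mem hc hvP)]
      exact (hF.disjoint_carrier e he c hc hce).mono_right
        (refineBoxes_subset hvP ha hb hq.kab_subset e he.2)

theorem IsFrame.pairwiseDisjoint_insert [DecidableEq V] (hF : IsFrame A H P p R) (hvP : v ∉ P)
    (ha : a ∈ P) (hb : b ∈ P) (hab : H.Adj a b)
    (hq : IsInsertion (p a) (p b) q (R s(a, b)) kaq kbq kab) :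
    (insert s(a, v) (insert s(b, v) (H.edgeSet ∩ P.sym2))).PairwiseDisjoint
      fun e => (refineBoxes R a b v kaq kbq kab e).toSet := by
  refine (((hF.pairwiseDisjoint.mono_on fun e he =>
    refineBoxes_subset hvP ha hb hq.kab_subset e he.2).insert fun e he _ => ?_).insert
      fun e he _ => ?_)
  · rw [refineBoxes_mk_bv]
    exact hF.disjoint_refineBoxes hvP ha hb hab hq.kab_subset hq.kbq_subset hq.disjoint_kbq_kab e he
  · rw [refineBoxes_mk_av (H.ne_of_adj hab)]
    rcases he with rfl | he
    · rw [refineBoxes_mk_bv]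
      exact hq.disjoint_kaq_kbq
    · exact hF.disjoint_refineBoxes hvP ha hb hab hq.kab_subset hq.kaq_subset
        hq.disjoint_kaq_kab e he

theorem IsFrame.exists_insert (hF : IsFrame A H P p R) (hAH : A ≤ H) (hvP : v ∉ P) (ha : a ∈ P)
    (hb : b ∈ P) (hab : H.Adj a b) (hv : ∀ u ∈ P, H.Adj u v ↔ u = a ∨ u = b) :
    ∃ p' R', IsFrame A H (insert v P) p' R' := by
  classical
  obtain ⟨q, kaq, kbq, kab, hq, hqa, hqb⟩ :=
    (hF.crossing a b ⟨hab, mk_mem_sym2_iff.2 ⟨ha, hb⟩⟩).exists_insertion (A.Adj a v) (A.Adj b v)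
  refine ⟨update p v q, refineBoxes R a b v kaq kbq kab,
    hF.adj_iff_insert hAH hvP ha hb hab hv hq.carrier_subset hqa hqb, ?_, ?_, ?_⟩ <;>
    rw [H.edgeSet_inter_sym2_insert ha hb hv]
  · exact hF.crossing_insert hvP ha hb (H.ne_of_adj hab) hq
  · exact hF.disjoint_carrier_insert hvP ha hb hab hq
  · exact hF.pairwiseDisjoint_insert hvP ha hb hab hq

end Insertion

theorem exists_isFrame_univ {V : Type*} {A H : SimpleGraph V} (hH : IsKTreeBase 2 2 H)
    (hAH : A ≤ H) : ∃ p R, IsFrame A H univ p R := by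
  classical
  obtain ⟨hN, r, hbase, hstep⟩ := hH
  have key : ∀ m, 2 ≤ m → m ≤ Nat.card V → ∃ p R, IsFrame A H {u | (r u : ℕ) < m} p R := by
    intro m hm
    induction m, hm using Nat.le_induction with
    | base =>
      intro _
      have hP : {u | (r u : ℕ) < 2} = {r.symm ⟨0, by omega⟩, r.symm ⟨1, by omega⟩} := by
        ext u
        simp only [mem_ofPred_eq, mem_insert_iff, mem_singleton_iff, Equiv.eq_symm_apply,
          Fin.ext_iff]
        omega
      rw [hP]
      exact exists_isFrame_pair (hbase _ _ (by simp) (by simp) (by simp))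
    | succ m hm ih =>
      intro hmN
      obtain ⟨p, R, hF⟩ := ih (by omega)
      set v := r.symm ⟨m, hmN⟩
      have hv : (r v : ℕ) = m := by simp [v]
      have hP : {u | (r u : ℕ) < m + 1} = insert v {u | (r u : ℕ) < m} := by
        ext u
        simp only [mem_ofPred_eq, mem_insert_iff, v, Equiv.eq_symm_apply, Fin.ext_iff]
        omega
      obtain ⟨S, hS, hSlt, hSclique, hSadj⟩ := hstep v (by omega)
      obtain ⟨a, b, hab, rfl⟩ := Finset.card_eq_two.1 hS
      rw [hP]
      refine hF.exists_insert hAH (by simp [hv]) (hv ▸ hSlt a (by simp)) (hv ▸ hSlt b (by simp))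
        (hSclique a (by simp) b (by simp) hab) fun u hu => ?_
      rw [hSadj u (hv ▸ hu)]
      simp
  simpa using key _ hN le_rfl

end LRep

theorem hasLRep_of_placedL {V : Type*} {G : SimpleGraph V} (p : V → LRep.PlacedL)
    (hp : ∀ u v, u ≠ v → (G.Adj u v ↔ ((p u).carrier ∩ (p v).carrier).Nonempty)) : HasLRep G :=
  ⟨fun v => ((p v).x, (p v).y, (p v).w, (p v).h), fun v => ⟨(p v).w_pos, (p v).h_pos⟩, hp⟩

theorem HasLRep.comap {V W : Type*} {G : SimpleGraph W} (f : V ↪ W) (hG : HasLRep G) :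
    HasLRep (G.comap f) :=
  let ⟨p, hpos, hp⟩ := hG
  ⟨p ∘ f, fun v => hpos (f v), fun u v huv => hp (f u) (f v) (f.injective.ne huv)⟩

theorem hasLRep_of_le_of_isKTreeBase {V : Type*} {A H : SimpleGraph V} (hH : IsKTreeBase 2 2 H)
    (hAH : A ≤ H) : HasLRep A :=
  let ⟨p, _, hF⟩ := LRep.exists_isFrame_univ hH hAH
  hasLRep_of_placedL p fun u v => hF.adj_iff u trivial v trivial

/-- Every graph of treewidth at most 2 (i.e. every subgraph of a
2-tree, built from an edge by repeatedly adding a vertex joined to the two endpoints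
of an existing edge) admits an `{L}`-representation. -/
theorem treewidth_two_hasLRep {V : Type*} (G : SimpleGraph V)
    (htw : ∃ (n : ℕ) (H : SimpleGraph (Fin n)) (f : V ↪ Fin n),
      IsKTreeBase 2 2 H ∧ ∀ u v : V, G.Adj u v → H.Adj (f u) (f v)) :
    HasLRep G := by
  obtain ⟨n, H, f, hH, hGH⟩ := htw
  rw [← SimpleGraph.comap_map_eq f G]
  exact (hasLRep_of_le_of_isKTreeBase hH ((SimpleGraph.map_le_iff_le_comap f G H).2 hGH)).comap f
end

section
/- For every graph G, the complement of the full subdivision of G (each edge subdivided exactly once) is a B_2-VPG-graph, i.e., has an intersection representation by axis-aligned rectilinear paths with at most 2 bends each. -/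
/-- The point set of the rectilinear path through `p 0, p 1, …, p (k+1)`:
the union of the `k+1` consecutive closed segments (a path with at most `k` bends). -/
def BendPathSet (k : ℕ) (p : ℕ → ℝ × ℝ) : Set (ℝ × ℝ) :=
  ⋃ i ∈ Finset.range (k + 1), segment ℝ (p i) (p (i + 1))

/-- The polyline through `p 0, …, p (k+1)` is rectilinear: every consecutive pair of
points lies on a common vertical or horizontal line. -/
def IsRectilinear (k : ℕ) (p : ℕ → ℝ × ℝ) : Prop :=
  ∀ i < k + 1, (p i).1 = (p (i + 1)).1 ∨ (p i).2 = (p (i + 1)).2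

/-- `G` is a `B_k`-VPG-graph: vertices can be represented by axis-aligned rectilinear
paths with at most `k` bends each so that two distinct vertices are adjacent iff the
corresponding paths intersect. -/
def IsBkVPG {V : Type*} (k : ℕ) (G : SimpleGraph V) : Prop :=
  ∃ p : V → ℕ → ℝ × ℝ, (∀ v, IsRectilinear k (p v)) ∧
    ∀ u v : V, u ≠ v →
      (G.Adj u v ↔ (BendPathSet k (p u) ∩ BendPathSet k (p v)).Nonempty)

/-- The full subdivision of `G` with every edge subdivided exactly once: one new
vertex `w_e` per edge `e = uv`, adjacent exactly to `u` and `v`. -/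
def fullSubdivision {V : Type*} (G : SimpleGraph V) : SimpleGraph (V ⊕ G.edgeSet) :=
  SimpleGraph.fromRel (fun a b =>
    ∃ (u : V) (e : G.edgeSet), a = Sum.inl u ∧ b = Sum.inr e ∧ u ∈ (e : Sym2 V))

/-!
Label the vertices of `G` by `0, …, n - 1`. Vertex `a` is drawn as the staircase
`(0, a) → (a, a) → (a, n + a) → (n, n + a)`, and the subdivision vertex of an edge with labels
`i < j` as the staircase
`(i + ½, j - ½) → (j + ½, j - ½) → (j + ½, n + i - ½) → (n + 1, n + i - ½)`.
Two vertex staircases `a < b` cross at `(a, b)`, and two edge staircases cross on the vertical leg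
of the one with the larger `j`. The staircase of the edge `ij` meets that of every label
`a ∉ {i, j}`: its lower leg crosses the vertical legs of the labels between `i` and `j`, and its
vertical leg crosses the lower legs of the labels above `j` and the upper legs of the labels
below `i`. Running on half-integer lines just beside the legs of `i` and `j`, it misses those two.
-/

open Set Function

namespace Sym2

variable {α β : Type*} [LinearOrder β] {f : α → β}

theorem mem_iff_eq_inf_map_or_eq_sup_map (hf : Injective f) {z : Sym2 α} {a : α} :
    a ∈ z ↔ f a = (z.map f).inf ∨ f a = (z.map f).sup := by
  induction z using Sym2.ind with
  | _ x y =>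
    rcases le_total (f x) (f y) with h | h <;> simp [h, hf.eq_iff, or_comm]

theorem inf_map_lt_sup_map (hf : Injective f) {z : Sym2 α} (hz : ¬z.IsDiag) :
    (z.map f).inf < (z.map f).sup := by
  induction z using Sym2.ind with
  | _ x y => simpa [hf.ne_iff, ne_comm] using hz

theorem sup_map_lt {z : Sym2 α} {b : β} (h : ∀ a ∈ z, f a < b) : (z.map f).sup < b := by
  induction z using Sym2.ind with
  | _ x y => simpa using h

end Sym2

section Graph

variable {V : Type*} {G : SimpleGraph V}

@[simp]
theorem fullSubdivision_adj_inl_inl (u w : V) : ¬(fullSubdivision G).Adj (.inl u) (.inl w) := by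
  simp [fullSubdivision]

@[simp]
theorem fullSubdivision_adj_inr_inr (e f : G.edgeSet) :
    ¬(fullSubdivision G).Adj (.inr e) (.inr f) := by
  simp [fullSubdivision]

@[simp]
theorem fullSubdivision_adj_inl_inr (u : V) (e : G.edgeSet) :
    (fullSubdivision G).Adj (.inl u) (.inr e) ↔ u ∈ (e : Sym2 V) := by
  simp [fullSubdivision]

end Graph

section Staircase

variable {x₀ x₁ x₂ y₀ y₁ : ℝ} {z : ℝ × ℝ}

theorem mem_segment_horizontal {a b c : ℝ} :
    z ∈ segment ℝ (a, c) (b, c) ↔ z.2 = c ∧ z.1 ∈ uIcc a b := by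
  rw [← Prod.image_mk_segment_left, segment_eq_uIcc]
  constructor
  · rintro ⟨x, hx, rfl⟩
    exact ⟨rfl, hx⟩
  · exact fun ⟨h, hx⟩ => ⟨z.1, hx, Prod.ext rfl h.symm⟩

theorem mem_segment_vertical {a b c : ℝ} :
    z ∈ segment ℝ (c, a) (c, b) ↔ z.1 = c ∧ z.2 ∈ uIcc a b := by
  rw [← Prod.image_mk_segment_right, segment_eq_uIcc]
  constructor
  · rintro ⟨y, hy, rfl⟩
    exact ⟨rfl, hy⟩
  · exact fun ⟨h, hy⟩ => ⟨z.2, hy, Prod.ext h.symm rfl⟩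

theorem mem_bendPathSet_two {p : ℕ → ℝ × ℝ} :
    z ∈ BendPathSet 2 p ↔ z ∈ segment ℝ (p 0) (p 1) ∨ z ∈ segment ℝ (p 1) (p 2) ∨
      z ∈ segment ℝ (p 2) (p 3) := by
  simp only [BendPathSet, mem_iUnion, Finset.mem_range, exists_prop]
  constructor
  · rintro ⟨i, hi, h⟩
    interval_cases i <;> simp only [h, true_or, or_true]
  · rintro (h | h | h)
    exacts [⟨0, by norm_num, h⟩, ⟨1, by norm_num, h⟩, ⟨2, by norm_num, h⟩]

def staircase (x₀ x₁ x₂ y₀ y₁ : ℝ) : ℕ → ℝ × ℝ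
  | 0 => (x₀, y₀)
  | 1 => (x₁, y₀)
  | 2 => (x₁, y₁)
  | _ => (x₂, y₁)

theorem isRectilinear_staircase : IsRectilinear 2 (staircase x₀ x₁ x₂ y₀ y₁) := by
  intro i hi
  interval_cases i <;> simp [staircase]

theorem mem_staircase : z ∈ BendPathSet 2 (staircase x₀ x₁ x₂ y₀ y₁) ↔
    (z.2 = y₀ ∧ z.1 ∈ uIcc x₀ x₁) ∨ (z.1 = x₁ ∧ z.2 ∈ uIcc y₀ y₁) ∨
      (z.2 = y₁ ∧ z.1 ∈ uIcc x₁ x₂) := by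
  simp only [mem_bendPathSet_two, staircase, mem_segment_horizontal, mem_segment_vertical]

end Staircase

section Representation

variable {n a b i j i' j' : ℕ} {z : ℝ × ℝ}

def vertexPath (n a : ℕ) : ℕ → ℝ × ℝ := staircase 0 a n a (n + a)

noncomputable def edgePath (n i j : ℕ) : ℕ → ℝ × ℝ :=
  staircase (i + 2⁻¹) (j + 2⁻¹) (n + 1) (j - 2⁻¹) (n + i - 2⁻¹)

theorem mem_vertexPath (ha : a ≤ n) : z ∈ BendPathSet 2 (vertexPath n a) ↔
    (z.2 = a ∧ z.1 ∈ Icc 0 (a : ℝ)) ∨ (z.1 = a ∧ z.2 ∈ Icc (a : ℝ) (n + a)) ∨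
      (z.2 = n + a ∧ z.1 ∈ Icc (a : ℝ) n) := by
  have ha' : (a : ℝ) ≤ n := by exact_mod_cast ha
  rw [vertexPath, mem_staircase, uIcc_of_le (Nat.cast_nonneg a), uIcc_of_le (by linarith),
    uIcc_of_le ha']

theorem mem_edgePath (hij : i ≤ j) (hj : j ≤ n) : z ∈ BendPathSet 2 (edgePath n i j) ↔
    (z.2 = j - 2⁻¹ ∧ z.1 ∈ Icc (i + 2⁻¹ : ℝ) (j + 2⁻¹)) ∨
      (z.1 = j + 2⁻¹ ∧ z.2 ∈ Icc (j - 2⁻¹ : ℝ) (n + i - 2⁻¹)) ∨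
        (z.2 = n + i - 2⁻¹ ∧ z.1 ∈ Icc (j + 2⁻¹ : ℝ) (n + 1)) := by
  have hij' : (i : ℝ) ≤ j := by exact_mod_cast hij
  have hj' : (j : ℝ) ≤ n := by exact_mod_cast hj
  rw [edgePath, mem_staircase, uIcc_of_le (by linarith), uIcc_of_le (by linarith),
    uIcc_of_le (by linarith)]

theorem vertexPath_inter_vertexPath_nonempty (hab : a ≠ b) (ha : a ≤ n) (hb : b ≤ n) :
    (BendPathSet 2 (vertexPath n a) ∩ BendPathSet 2 (vertexPath n b)).Nonempty := by
  wlog h : a < b generalizing a b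
  · rw [inter_comm]
    exact this hab.symm hb ha (lt_of_le_of_ne (not_lt.1 h) hab.symm)
  have h' : (a : ℝ) < b := by exact_mod_cast h
  have hb' : (b : ℝ) ≤ n := by exact_mod_cast hb
  refine ⟨(a, b), (mem_vertexPath ha).2 ?_, (mem_vertexPath hb).2 ?_⟩
  · exact Or.inr (Or.inl ⟨rfl, h'.le, by linarith⟩)
  · exact Or.inl ⟨rfl, Nat.cast_nonneg a, h'.le⟩

theorem edgePath_inter_edgePath_nonempty (hij : i < j) (hj : j ≤ n) (hij' : i' < j')
    (hj' : j' ≤ n) :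
    (BendPathSet 2 (edgePath n i j) ∩ BendPathSet 2 (edgePath n i' j')).Nonempty := by
  wlog h : j ≤ j' generalizing i j i' j'
  · rw [inter_comm]
    exact this hij' hj' hij hj (le_of_not_ge h)
  have : (j : ℝ) ≤ j' := by exact_mod_cast h
  have : (j' : ℝ) ≤ n := by exact_mod_cast hj'
  have : (i : ℝ) < j := by exact_mod_cast hij
  have : (i' : ℝ) < j' := by exact_mod_cast hij'
  have hQ {z} := mem_edgePath (z := z) hij.le hj
  have hQ' {z} := mem_edgePath (z := z) hij'.le hj'
  rcases le_total (i : ℝ) i' with hii | hii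
  · refine ⟨(j' + 2⁻¹, n + i - 2⁻¹), hQ.2 ?_, hQ'.2 ?_⟩
    · exact Or.inr (Or.inr ⟨rfl, by linarith, by linarith⟩)
    · exact Or.inr (Or.inl ⟨rfl, by linarith, by linarith⟩)
  · refine ⟨(j + 2⁻¹, j' - 2⁻¹), hQ.2 ?_, hQ'.2 ?_⟩
    · exact Or.inr (Or.inl ⟨rfl, by linarith, by linarith⟩)
    · exact Or.inl ⟨rfl, by linarith, by linarith⟩

theorem vertexPath_inter_edgePath_nonempty (ha : a < n) (hij : i < j) (hj : j < n) (hai : a ≠ i)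
    (haj : a ≠ j) :
    (BendPathSet 2 (vertexPath n a) ∩ BendPathSet 2 (edgePath n i j)).Nonempty := by
  have : (a : ℝ) + 1 ≤ n := by exact_mod_cast ha
  have : (i : ℝ) + 1 ≤ j := by exact_mod_cast hij
  have : (j : ℝ) + 1 ≤ n := by exact_mod_cast hj
  have hP {z} := mem_vertexPath (z := z) ha.le
  have hQ {z} := mem_edgePath (z := z) hij.le hj.le
  rcases hai.lt_or_gt with hai | hia
  · have : (a : ℝ) + 1 ≤ i := by exact_mod_cast hai
    refine ⟨(j + 2⁻¹, n + a), hP.2 ?_, hQ.2 ?_⟩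
    · exact Or.inr (Or.inr ⟨rfl, by linarith, by linarith⟩)
    · exact Or.inr (Or.inl ⟨rfl, by linarith, by linarith⟩)
  have : (i : ℝ) + 1 ≤ a := by exact_mod_cast hia
  rcases haj.lt_or_gt with haj | hja
  · have : (a : ℝ) + 1 ≤ j := by exact_mod_cast haj
    refine ⟨(a, j - 2⁻¹), hP.2 ?_, hQ.2 ?_⟩
    · exact Or.inr (Or.inl ⟨rfl, by linarith, by linarith⟩)
    · exact Or.inl ⟨rfl, by linarith, by linarith⟩
  · have : (j : ℝ) + 1 ≤ a := by exact_mod_cast hja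
    refine ⟨(j + 2⁻¹, a), hP.2 ?_, hQ.2 ?_⟩
    · exact Or.inl ⟨rfl, by linarith, by linarith⟩
    · exact Or.inr (Or.inl ⟨rfl, by linarith, by linarith⟩)

theorem disjoint_vertexPath_edgePath (hij : i < j) (hj : j < n) (ha : a = i ∨ a = j) :
    Disjoint (BendPathSet 2 (vertexPath n a)) (BendPathSet 2 (edgePath n i j)) := by
  refine disjoint_left.2 fun z hP hQ => ?_
  have : (i : ℝ) + 1 ≤ j := by exact_mod_cast hij
  have : (j : ℝ) + 1 ≤ n := by exact_mod_cast hj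
  rw [mem_edgePath hij.le hj.le] at hQ
  rcases ha with rfl | rfl <;> rw [mem_vertexPath (by omega)] at hP <;>
    rcases hP with ⟨h₁, h₂, h₃⟩ | ⟨h₁, h₂, h₃⟩ | ⟨h₁, h₂, h₃⟩ <;>
      rcases hQ with ⟨g₁, g₂, g₃⟩ | ⟨g₁, g₂, g₃⟩ | ⟨g₁, g₂, g₃⟩ <;> linarith

theorem vertexPath_inter_edgePath_nonempty_iff (ha : a < n) (hij : i < j) (hj : j < n) :
    (BendPathSet 2 (vertexPath n a) ∩ BendPathSet 2 (edgePath n i j)).Nonempty ↔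
      a ≠ i ∧ a ≠ j :=
  ⟨fun h => not_or.1 fun h' => not_disjoint_iff_nonempty_inter.2 h
      (disjoint_vertexPath_edgePath hij hj h'),
    fun h => vertexPath_inter_edgePath_nonempty ha hij hj h.1 h.2⟩

end Representation

/-- For every graph `G`, the complement of the full subdivision of
`G` (each edge subdivided exactly once) is a `B₂`-VPG-graph. -/
theorem complement_fullSubdivision_isB2VPG {V : Type*} [Fintype V]
    (G : SimpleGraph V) : IsBkVPG 2 (fullSubdivision G)ᶜ := by
  set n := Fintype.card V
  let ν (v : V) : ℕ := Fintype.equivFin V v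
  have hν : Injective ν := Fin.val_injective.comp (Fintype.equivFin V).injective
  have hνn (v : V) : ν v < n := (Fintype.equivFin V v).isLt
  let lo (e : G.edgeSet) : ℕ := ((e : Sym2 V).map ν).inf
  let hi (e : G.edgeSet) : ℕ := ((e : Sym2 V).map ν).sup
  have hlo (e : G.edgeSet) : lo e < hi e :=
    Sym2.inf_map_lt_sup_map hν (G.not_isDiag_of_mem_edgeSet e.2)
  have hhi (e : G.edgeSet) : hi e < n := Sym2.sup_map_lt fun v _ => hνn v
  let path := Sum.elim (fun v => vertexPath n (ν v)) (fun e => edgePath n (lo e) (hi e))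
  have vertex_edge (u : V) (e : G.edgeSet) : (fullSubdivision G)ᶜ.Adj (.inl u) (.inr e) ↔
      (BendPathSet 2 (path (.inl u)) ∩ BendPathSet 2 (path (.inr e))).Nonempty := by
    rw [SimpleGraph.compl_adj, fullSubdivision_adj_inl_inr,
      Sym2.mem_iff_eq_inf_map_or_eq_sup_map hν, not_or]
    exact (and_iff_right Sum.inl_ne_inr).trans
      (vertexPath_inter_edgePath_nonempty_iff (hνn u) (hlo e) (hhi e)).symm
  refine ⟨path, (Sum.rec (fun _ => isRectilinear_staircase) fun _ => isRectilinear_staircase), ?_⟩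
  rintro (u | e) (w | f) hne
  · refine iff_of_true (by simpa using hne) ?_
    exact vertexPath_inter_vertexPath_nonempty (hν.ne (by simpa using hne)) (hνn u).le (hνn w).le
  · exact vertex_edge u f
  · rw [SimpleGraph.adj_comm, inter_comm]
    exact vertex_edge w e
  · exact iff_of_true (by simpa using hne)
      (edgePath_inter_edgePath_nonempty (hlo e) (hhi e).le (hlo f) (hhi f).le)
end

section
/- Fix n ≥ 1 and for 1 ≤ i ≤ n let P(v_i) be the 2-bend path from (i,0) to (i,i) to (i+n,i) to (i+n,n+1). Then for all i ≠ j, the paths P(v_i) and P(v_j) intersect. -/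
/-! For `i < j` the paths meet at `(j, i)`: this point lies on the horizontal leg of `P(v_i)`,
since `i ≤ j ≤ n ≤ i + n`, and on the vertical leg of `P(v_j)`, since `0 ≤ i ≤ j`. -/

/-- The 2-bend `v`-path `P(v_i)`: from `(i,0)` up to `(i,i)`, right to `(i+n,i)`,
and up to `(i+n,n+1)`. -/
def vPath (n i : ℕ) : Set (ℝ × ℝ) :=
  segment ℝ ((i : ℝ), 0) ((i : ℝ), (i : ℝ)) ∪
    segment ℝ ((i : ℝ), (i : ℝ)) ((i : ℝ) + n, (i : ℝ)) ∪
    segment ℝ ((i : ℝ) + n, (i : ℝ)) ((i : ℝ) + n, (n : ℝ) + 1)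

/-- The 2-bend `w`-path `P(w_{ij})`: from `(j-1/4, i+1/4)` up to `(j-1/4, j+1/4)`,
right to `(i+n-1/4, j+1/4)`, and up to `(i+n-1/4, n+1)`. -/
def wPath (n i j : ℕ) : Set (ℝ × ℝ) :=
  segment ℝ ((j : ℝ) - 1/4, (i : ℝ) + 1/4) ((j : ℝ) - 1/4, (j : ℝ) + 1/4) ∪
    segment ℝ ((j : ℝ) - 1/4, (j : ℝ) + 1/4) ((i : ℝ) + n - 1/4, (j : ℝ) + 1/4) ∪
    segment ℝ ((i : ℝ) + n - 1/4, (j : ℝ) + 1/4) ((i : ℝ) + n - 1/4, (n : ℝ) + 1)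

open Set

section Prod

variable {𝕜 E F : Type*} [Semiring 𝕜] [PartialOrder 𝕜] [AddCommMonoid E] [AddCommMonoid F]
  [Module 𝕜 E] [Module 𝕜 F]

theorem Prod.mk_mem_segment_left {x₁ x₂ x : E} (y : F)
    (hx : x ∈ segment 𝕜 x₁ x₂) : (x, y) ∈ segment 𝕜 (x₁, y) (x₂, y) :=
  Prod.image_mk_segment_left (𝕜 := 𝕜) x₁ x₂ y ▸ mem_image_of_mem _ hx

theorem Prod.mk_mem_segment_right (x : E) {y₁ y₂ y : F}
    (hy : y ∈ segment 𝕜 y₁ y₂) : (x, y) ∈ segment 𝕜 (x, y₁) (x, y₂) :=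
  Prod.image_mk_segment_right (𝕜 := 𝕜) x y₁ y₂ ▸ mem_image_of_mem _ hy

end Prod

theorem mk_mem_vPath_of_mem_Icc {n i : ℕ} {x : ℝ} (hx : x ∈ Icc (i : ℝ) (i + n)) :
    (x, (i : ℝ)) ∈ vPath n i := by
  refine Or.inl (Or.inr (Prod.mk_mem_segment_left _ ?_))
  rwa [segment_eq_Icc (by simp)]

theorem mk_mem_vPath_of_mem_Icc_zero {n i : ℕ} {y : ℝ} (hy : y ∈ Icc 0 (i : ℝ)) :
    ((i : ℝ), y) ∈ vPath n i := by
  refine Or.inl (Or.inl (Prod.mk_mem_segment_right _ ?_))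
  rwa [segment_eq_Icc (by simp)]

theorem vPaths_intersect_general (n : ℕ) (i j : ℕ)
    (hin : i ≤ n) (hjn : j ≤ n) (hij : i ≠ j) :
    (vPath n i ∩ vPath n j).Nonempty := by
  wlog hlt : i < j generalizing i j
  · rw [inter_comm]
    exact this j i hjn hin hij.symm (by omega)
  have hij' : (i : ℝ) ≤ j := by exact_mod_cast hlt.le
  have hjn' : (j : ℝ) ≤ n := by exact_mod_cast hjn
  refine ⟨((j : ℝ), (i : ℝ)), mk_mem_vPath_of_mem_Icc ⟨hij', ?_⟩,
    mk_mem_vPath_of_mem_Icc_zero ⟨i.cast_nonneg, hij'⟩⟩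
  linarith [i.cast_nonneg (α := ℝ)]

/-- For `1 ≤ i, j ≤ n` with `i ≠ j`, the 2-bend paths `P(v_i)` and
`P(v_j)` intersect. -/
theorem vPaths_intersect (n : ℕ) (hn : 1 ≤ n) (i j : ℕ)
    (hi1 : 1 ≤ i) (hin : i ≤ n) (hj1 : 1 ≤ j) (hjn : j ≤ n) (hij : i ≠ j) :
    (vPath n i ∩ vPath n j).Nonempty :=
  vPaths_intersect_general n i j hin hjn hij
end

section
/- Fix n ≥ 1, let i < j ≤ n, and define the v-paths P(v_k) for 1 ≤ k ≤ n as the union of segments from (k,0) to (k,k), (k,k) to (k+n,k), and (k+n,k) to (k+n,n+1). Define the w-path P(w_{ij}) as the union of segments from (j−1/4, i+1/4) to (j−1/4, j+1/4), then to (i+n−1/4, j+1/4), then to (i+n−1/4, n+1). Then P(w_{ij}) intersects P(v_k) for every k ∉ {i,j}, and P(w_{ij}) is disjoint from P(v_i) and from P(v_j). -/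
lemma mem_segment_vertical_s8 {x a b : ℝ} {p : ℝ × ℝ} (hab : a ≤ b) :
    p ∈ segment ℝ (x, a) (x, b) ↔ p.1 = x ∧ a ≤ p.2 ∧ p.2 ≤ b := by
  rw [← Prod.image_mk_segment_right, segment_eq_Icc hab]
  constructor
  · rintro ⟨y, hy, rfl⟩
    exact ⟨rfl, hy⟩
  · rintro ⟨hx, hy⟩
    exact ⟨p.2, hy, Prod.ext hx.symm rfl⟩

lemma mem_segment_horizontal_s8 {y a b : ℝ} {p : ℝ × ℝ} (hab : a ≤ b) :
    p ∈ segment ℝ (a, y) (b, y) ↔ p.2 = y ∧ a ≤ p.1 ∧ p.1 ≤ b := by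
  rw [← Prod.image_mk_segment_left, segment_eq_Icc hab]
  constructor
  · rintro ⟨x, hx, rfl⟩
    exact ⟨rfl, hx⟩
  · rintro ⟨hy, hx⟩
    exact ⟨p.1, hx, Prod.ext rfl hy.symm⟩

lemma mem_vPath {n k : ℕ} {p : ℝ × ℝ} (hkn : k ≤ n) :
    p ∈ vPath n k ↔
      (p.1 = k ∧ 0 ≤ p.2 ∧ p.2 ≤ k) ∨ (p.2 = k ∧ k ≤ p.1 ∧ p.1 ≤ k + n) ∨
        (p.1 = k + n ∧ k ≤ p.2 ∧ p.2 ≤ n + 1) := by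
  have hknR : (k : ℝ) ≤ n := by exact_mod_cast hkn
  rw [vPath, Set.mem_union, Set.mem_union, mem_segment_vertical_s8 (Nat.cast_nonneg k),
    mem_segment_horizontal_s8 (by linarith), mem_segment_vertical_s8 (by linarith), or_assoc]

lemma mem_wPath {n i j : ℕ} {p : ℝ × ℝ} (hij : i ≤ j) (hjn : j ≤ n) :
    p ∈ wPath n i j ↔
      (p.1 = j - 1/4 ∧ i + 1/4 ≤ p.2 ∧ p.2 ≤ j + 1/4) ∨
        (p.2 = j + 1/4 ∧ j - 1/4 ≤ p.1 ∧ p.1 ≤ i + n - 1/4) ∨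
          (p.1 = i + n - 1/4 ∧ j + 1/4 ≤ p.2 ∧ p.2 ≤ n + 1) := by
  have hijR : (i : ℝ) ≤ j := by exact_mod_cast hij
  have hjnR : (j : ℝ) ≤ n := by exact_mod_cast hjn
  have hiR : (0 : ℝ) ≤ i := Nat.cast_nonneg i
  rw [wPath, Set.mem_union, Set.mem_union, mem_segment_vertical_s8 (by linarith),
    mem_segment_horizontal_s8 (by linarith), mem_segment_vertical_s8 (by linarith), or_assoc]

lemma wPath_inter_vPath_nonempty {n i j k : ℕ} (hi : 1 ≤ i) (hij : i < j) (hjn : j ≤ n)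
    (hkn : k ≤ n) (hki : k ≠ i) (hkj : k ≠ j) : (wPath n i j ∩ vPath n k).Nonempty := by
  have hiR : (1 : ℝ) ≤ i := by exact_mod_cast hi
  have hijR : (i : ℝ) < j := by exact_mod_cast hij
  have hjnR : (j : ℝ) ≤ n := by exact_mod_cast hjn
  have hknR : (k : ℝ) ≤ n := by exact_mod_cast hkn
  simp only [Set.Nonempty, Set.mem_inter_iff, mem_wPath hij.le hjn, mem_vPath hkn]
  rcases lt_or_gt_of_ne hki with hki | hik
  · have hkiR : (k : ℝ) + 1 ≤ i := by exact_mod_cast hki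
    exact ⟨(k + n, j + 1/4), Or.inr (Or.inl ⟨rfl, by linarith, by linarith⟩),
      Or.inr (Or.inr ⟨rfl, by linarith, by linarith⟩)⟩
  rcases lt_or_gt_of_ne hkj with hkj | hjk
  · have hikR : (i : ℝ) + 1 ≤ k := by exact_mod_cast hik
    have hkjR : (k : ℝ) + 1 ≤ j := by exact_mod_cast hkj
    exact ⟨(j - 1/4, k), Or.inl ⟨rfl, by linarith, by linarith⟩,
      Or.inr (Or.inl ⟨rfl, by linarith, by linarith⟩)⟩
  · have hjkR : (j : ℝ) + 1 ≤ k := by exact_mod_cast hjk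
    exact ⟨(k, j + 1/4), Or.inr (Or.inl ⟨rfl, by linarith, by linarith⟩),
      Or.inl ⟨rfl, by linarith, by linarith⟩⟩

lemma wPath_inter_vPath_eq_empty {n i j k : ℕ} (hij : i < j) (hjn : j ≤ n)
    (hk : k = i ∨ k = j) : wPath n i j ∩ vPath n k = ∅ := by
  have hijR : (i : ℝ) + 1 ≤ j := by exact_mod_cast hij
  have hjnR : (j : ℝ) ≤ n := by exact_mod_cast hjn
  have hiR : (0 : ℝ) ≤ i := Nat.cast_nonneg i
  have hkn : k ≤ n := by omega
  refine Set.eq_empty_iff_forall_notMem.2 fun p ⟨hw, hv⟩ ↦ ?_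
  rw [mem_wPath hij.le hjn] at hw
  rw [mem_vPath hkn] at hv
  rcases hk with rfl | rfl <;>
    rcases hw with ⟨hw, hw₁, hw₂⟩ | ⟨hw, hw₁, hw₂⟩ | ⟨hw, hw₁, hw₂⟩ <;>
    rcases hv with ⟨hv, hv₁, hv₂⟩ | ⟨hv, hv₁, hv₂⟩ | ⟨hv, hv₁, hv₂⟩ <;>
    linarith

theorem wPath_meets_exactly_non_neighbours_general (n : ℕ) (i j : ℕ)
    (hi1 : 1 ≤ i) (hij : i < j) (hjn : j ≤ n) :
    (∀ k : ℕ, 1 ≤ k → k ≤ n → k ≠ i → k ≠ j →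
      (wPath n i j ∩ vPath n k).Nonempty) ∧
    wPath n i j ∩ vPath n i = ∅ ∧ wPath n i j ∩ vPath n j = ∅ :=
  ⟨fun _ _ hkn hki hkj ↦ wPath_inter_vPath_nonempty hi1 hij hjn hkn hki hkj,
    wPath_inter_vPath_eq_empty hij hjn (Or.inl rfl),
    wPath_inter_vPath_eq_empty hij hjn (Or.inr rfl)⟩

/-- For `1 ≤ i < j ≤ n`, the `w`-path `P(w_{ij})` intersects every
`v`-path `P(v_k)` with `k ∉ {i, j}` (`1 ≤ k ≤ n`) and is disjoint from `P(v_i)` and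
`P(v_j)`. -/
theorem wPath_meets_exactly_non_neighbours (n : ℕ) (hn : 1 ≤ n) (i j : ℕ)
    (hi1 : 1 ≤ i) (hij : i < j) (hjn : j ≤ n) :
    (∀ k : ℕ, 1 ≤ k → k ≤ n → k ≠ i → k ≠ j →
      (wPath n i j ∩ vPath n k).Nonempty) ∧
    wPath n i j ∩ vPath n i = ∅ ∧ wPath n i j ∩ vPath n j = ∅ :=
  wPath_meets_exactly_non_neighbours_general n i j hi1 hij hjn
end

section
/- If an edge e of a graph G is subdivided k ≥ 3 times in a subdivision H, then H is also a full subdivision (every edge subdivided once or twice) of the graph G' obtained from G by subdividing e once. Consequently, every full subdivision of some graph is a subdivision, with each edge subdivided exactly once or twice, of some (possibly different) graph. -/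
/-- `IsSubdivisionWith H G P`: the graph `H` is obtained from `G` by replacing each
edge `e = uv` of `G` by a path from `u` to `v` through `m e` new internal vertices,
where every multiplicity `m e` satisfies `1 ≤ m e` and the predicate `P`; distinct
edges use disjoint sets of new vertices, and `H` has no other vertices or edges. -/
def IsSubdivisionWith {V : Type*} {W : Type*} (H : SimpleGraph W) (G : SimpleGraph V)
    (P : ℕ → Prop) : Prop :=
  ∃ (ι : V → W) (m : G.edgeSet → ℕ) (w : (e : G.edgeSet) → Fin (m e) → W)
    (ends : G.edgeSet → V × V),
    (∀ e, 1 ≤ m e) ∧ (∀ e, P (m e)) ∧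
    (∀ e : G.edgeSet, (e : Sym2 V) = s((ends e).1, (ends e).2)) ∧
    Function.Injective (fun x : V ⊕ (Σ e : G.edgeSet, Fin (m e)) =>
      Sum.elim ι (fun q => w q.1 q.2) x) ∧
    (∀ x : W, (∃ v, ι v = x) ∨ ∃ e i, w e i = x) ∧
    (∀ x y : W, H.Adj x y ↔ ∃ e : G.edgeSet,
      (∃ i j : Fin (m e), ((i : ℕ) + 1 = j ∨ (j : ℕ) + 1 = i) ∧ x = w e i ∧ y = w e j) ∨
      (∃ h : 0 < m e,
        (x = ι (ends e).1 ∧ y = w e ⟨0, h⟩) ∨ (y = ι (ends e).1 ∧ x = w e ⟨0, h⟩) ∨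
        (x = ι (ends e).2 ∧ y = w e ⟨m e - 1, Nat.sub_lt h Nat.one_pos⟩) ∨
        (y = ι (ends e).2 ∧ x = w e ⟨m e - 1, Nat.sub_lt h Nat.one_pos⟩)))

/-- `H` is a full subdivision of `G`: each edge of `G` is subdivided at least once. -/
def IsFullSubdivisionOf {V : Type*} {W : Type*} (H : SimpleGraph W) (G : SimpleGraph V) : Prop :=
  IsSubdivisionWith H G (fun _ => True)

/-!
Cut the path of `H` that replaces an edge of `G` with `n ≥ 1` inner vertices at its inner
vertices of even position below `n`. Every piece then has one inner vertex, except the last one,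
which has two when `n` is even. The images of the vertices of `G` together with the cut vertices
span the new graph, with one edge per piece.
-/

open Function

section

variable {V W E : Type*}

theorem Sigma.fin_ext_iff {m : E → ℕ} {q q' : Σ e, Fin (m e)} :
    q = q' ↔ q.1 = q'.1 ∧ (q.2 : ℕ) = q'.2 :=
  Sigma.ext_iff.trans (and_congr_right fun h => Fin.heq_ext_iff (congrArg m h))

/-- The clause of `IsSubdivisionWith` listing the edges of `H` on the path
`a, f 0, …, f (n-1), b`. -/
def SegmentAdj {n : ℕ} (a b : W) (f : Fin n → W) (x y : W) : Prop :=
  (∃ i j : Fin n, ((i : ℕ) + 1 = j ∨ (j : ℕ) + 1 = i) ∧ x = f i ∧ y = f j) ∨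
  (∃ h : 0 < n,
    (x = a ∧ y = f ⟨0, h⟩) ∨ (y = a ∧ x = f ⟨0, h⟩) ∨
    (x = b ∧ y = f ⟨n - 1, Nat.sub_lt h Nat.one_pos⟩) ∨
    (y = b ∧ x = f ⟨n - 1, Nat.sub_lt h Nat.one_pos⟩))

theorem SegmentAdj.symm {n : ℕ} {a b : W} {f : Fin n → W} {x y : W}
    (h : SegmentAdj a b f x y) : SegmentAdj a b f y x := by
  rcases h with ⟨i, j, hij, hx, hy⟩ | ⟨hn, h | h | h | h⟩
  · exact .inl ⟨j, i, hij.symm, hy, hx⟩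
  · exact .inr ⟨hn, .inr (.inl h)⟩
  · exact .inr ⟨hn, .inl h⟩
  · exact .inr ⟨hn, .inr (.inr (.inr h))⟩
  · exact .inr ⟨hn, .inr (.inr (.inl h))⟩

theorem segmentAdj_iff {n : ℕ} (hn : 0 < n) (q : ℕ → W) (x y : W) :
    SegmentAdj (q 0) (q (n + 1)) (fun i : Fin n => q (i + 1)) x y ↔
      ∃ i ≤ n, s(x, y) = s(q i, q (i + 1)) := by
  have hlast : q (n - 1 + 1) = q n := by rw [Nat.sub_add_cancel hn]
  constructor
  · rintro (⟨i, j, hij | hij, rfl, rfl⟩ | ⟨-, ⟨rfl, rfl⟩ | ⟨rfl, rfl⟩ | ⟨rfl, rfl⟩ | ⟨rfl, rfl⟩⟩)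
    · exact ⟨i + 1, by omega, by simp only [← hij]⟩
    · exact ⟨j + 1, by omega, by simp only [← hij, Sym2.eq_swap]⟩
    · exact ⟨0, hn.le, rfl⟩
    · exact ⟨0, hn.le, Sym2.eq_swap⟩
    · exact ⟨n, le_rfl, by simp only [hlast, Sym2.eq_swap]⟩
    · exact ⟨n, le_rfl, by simp only [hlast]⟩
  · rintro ⟨i, hi, h⟩
    suffices SegmentAdj (q 0) (q (n + 1)) (fun i : Fin n => q (i + 1)) (q i) (q (i + 1)) by
      obtain ⟨rfl, rfl⟩ | ⟨rfl, rfl⟩ := Sym2.eq_iff.mp h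
      exacts [this, this.symm]
    rcases i with _ | k
    · exact .inr ⟨hn, .inl ⟨rfl, rfl⟩⟩
    obtain rfl | hk := eq_or_lt_of_le hi
    · exact .inr ⟨hn, .inr (.inr (.inr ⟨rfl, hlast.symm⟩))⟩
    · exact .inl ⟨⟨k, by omega⟩, ⟨k + 1, hk⟩, .inl rfl, rfl, rfl⟩

/-- The path `a, f 0, …, f (n-1), b`, indexed by `ℕ` (constant `b` beyond its end). -/
def pathOf (a b : W) {n : ℕ} (f : Fin n → W) (i : ℕ) : W :=
  if i = 0 then a else if h : i - 1 < n then f ⟨i - 1, h⟩ else b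

theorem pathOf_zero (a b : W) {n : ℕ} (f : Fin n → W) : pathOf a b f 0 = a := rfl

theorem pathOf_succ (a b : W) {n : ℕ} (f : Fin n → W) (i : Fin n) :
    pathOf a b f (i + 1) = f i := by
  simp [pathOf]

theorem pathOf_last (a b : W) {n : ℕ} (f : Fin n → W) : pathOf a b f (n + 1) = b := by
  simp [pathOf]

/-- Piece `t` of a path with `n` inner vertices runs from position `2 * t` to position
`2 * t + pieceSize n t + 1`. -/
def numPieces (n : ℕ) : ℕ := (n + 1) / 2

def pieceSize (n t : ℕ) : ℕ := if t + 1 = numPieces n then n - 2 * t else 1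

theorem pieceSize_spec {n t : ℕ} (ht : t < numPieces n) :
    1 ≤ pieceSize n t ∧ pieceSize n t ≤ 2 ∧
      (2 * t + pieceSize n t = n ∨ pieceSize n t = 1 ∧ 2 * t + 2 < n) := by
  unfold pieceSize numPieces at *
  split_ifs <;> omega

theorem exists_piece {n i : ℕ} (hn : 0 < n) (hi : i ≤ n) :
    ∃ t < numPieces n, ∃ j ≤ pieceSize n t, 2 * t + j = i := by
  have ht : min (i / 2) (numPieces n - 1) < numPieces n := by unfold numPieces; omega
  refine ⟨_, ht, i - 2 * min (i / 2) (numPieces n - 1), ?_, by omega⟩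
  unfold pieceSize numPieces at *
  split_ifs <;> omega

/-- Subdivision data in path form: the edge `edge e` of `G` is replaced by the path
`p e 0, p e 1, …, p e (m e + 1)` of `H`, whose inner vertices are the new ones. -/
structure SubdivisionPaths (H : SimpleGraph W) (G : SimpleGraph V) (E : Type*) where
  edge : E ≃ G.edgeSet
  ends : E → V × V
  edge_eq : ∀ e, (edge e : Sym2 V) = s((ends e).1, (ends e).2)
  ι : V → W
  m : E → ℕ
  p : E → ℕ → W
  one_le_m : ∀ e, 1 ≤ m e
  p_zero : ∀ e, p e 0 = ι (ends e).1
  p_last : ∀ e, p e (m e + 1) = ι (ends e).2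
  ι_injective : Injective ι
  inner_inj : ∀ {e e' i i'}, 0 < i → i ≤ m e → 0 < i' → i' ≤ m e' →
    p e i = p e' i' → e = e' ∧ i = i'
  ι_ne_inner : ∀ v {e i}, 0 < i → i ≤ m e → ι v ≠ p e i
  cover : ∀ x, (∃ v, ι v = x) ∨ ∃ e i, 0 < i ∧ i ≤ m e ∧ p e i = x
  adj_iff : ∀ x y, H.Adj x y ↔ ∃ e, ∃ i ≤ m e, s(x, y) = s(p e i, p e (i + 1))

variable {H : SimpleGraph W} {G : SimpleGraph V}

theorem IsSubdivisionWith.nonempty_subdivisionPaths {P : ℕ → Prop}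
    (h : IsSubdivisionWith H G P) : Nonempty (SubdivisionPaths H G G.edgeSet) := by
  obtain ⟨ι, m, w, ends, one_le_m, -, edge_eq, hinj, hcover, hadj⟩ := h
  obtain ⟨ι_injective, w_injective, ι_ne_w⟩ := Sum.elim_injective.mp hinj
  set p := fun e => pathOf (ι (ends e).1) (ι (ends e).2) (w e)
  have p_inner : ∀ {e i}, 0 < i → i ≤ m e → ∃ k : Fin (m e), (k : ℕ) + 1 = i ∧ p e i = w e k :=
    fun {e i} hi hie => by
      obtain ⟨k, rfl⟩ : ∃ k, i = k + 1 := ⟨i - 1, by omega⟩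
      exact ⟨⟨k, by omega⟩, rfl, pathOf_succ _ _ (w e) ⟨k, _⟩⟩
  refine ⟨{
    edge := Equiv.refl _
    ends := ends
    edge_eq := edge_eq
    ι := ι
    m := m
    p := p
    one_le_m := one_le_m
    p_zero := fun _ => rfl
    p_last := fun _ => pathOf_last _ _ _
    ι_injective := ι_injective
    inner_inj := ?_
    ι_ne_inner := ?_
    cover := ?_
    adj_iff := ?_ }⟩
  · intro e e' i i' hi hie hi' hie' hp
    obtain ⟨k, rfl, hk⟩ := p_inner hi hie
    obtain ⟨k', rfl, hk'⟩ := p_inner hi' hie'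
    have := Sigma.fin_ext_iff.mp (@w_injective ⟨e, k⟩ ⟨e', k'⟩ (hk.symm.trans (hp.trans hk')))
    exact ⟨this.1, congrArg (· + 1) this.2⟩
  · intro v e i hi hie
    obtain ⟨k, -, hk⟩ := p_inner hi hie
    exact hk ▸ ι_ne_w v ⟨e, k⟩
  · intro x
    refine (hcover x).imp_right ?_
    rintro ⟨e, k, rfl⟩
    exact ⟨e, k + 1, k.succ_pos, k.isLt, pathOf_succ ..⟩
  · intro x y
    refine (hadj x y).trans (exists_congr fun e => ?_)
    rw [← segmentAdj_iff (one_le_m e)]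
    simp only [p, pathOf_zero, pathOf_last, pathOf_succ]
    rfl

theorem SubdivisionPaths.isSubdivisionWith (D : SubdivisionPaths H G E) {P : ℕ → Prop}
    (hP : ∀ e, P (D.m e)) : IsSubdivisionWith H G P := by
  let σ := D.edge.symm
  refine ⟨D.ι, fun f => D.m (σ f), fun f i => D.p (σ f) (i + 1), fun f => D.ends (σ f),
    fun f => D.one_le_m _, fun f => hP _, fun f => ?_, ?_, ?_, fun x y => ?_⟩
  · rw [← D.edge_eq, Equiv.apply_symm_apply]
  · refine D.ι_injective.sumElim ?_ fun v q => D.ι_ne_inner v q.2.val.succ_pos q.2.isLt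
    rintro ⟨f, k⟩ ⟨f', k'⟩ h
    obtain ⟨hf, hk⟩ := D.inner_inj k.val.succ_pos k.isLt k'.val.succ_pos k'.isLt h
    exact Sigma.fin_ext_iff.mpr ⟨σ.injective hf, by dsimp only; omega⟩
  · intro x
    refine (D.cover x).imp_right ?_
    rintro ⟨e, i, hi, hie, rfl⟩
    obtain ⟨f, rfl⟩ := σ.surjective e
    exact ⟨f, ⟨i - 1, by simp only; omega⟩, by simp only [Nat.sub_add_cancel hi]⟩
  · refine (D.adj_iff x y).trans (σ.surjective.exists.trans (exists_congr fun f => ?_))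
    rw [← D.p_zero, ← D.p_last, ← segmentAdj_iff (D.one_le_m _)]
    rfl

namespace SubdivisionPaths

variable (D : SubdivisionPaths H G E)

theorem p_eq_of_inner {e e' : E} {i i' : ℕ} (hi : 0 < i) (hie : i ≤ D.m e)
    (hi' : i' ≤ D.m e' + 1) (h : D.p e i = D.p e' i') : e = e' ∧ i = i' := by
  rcases Nat.eq_zero_or_pos i' with rfl | hi'0
  · exact absurd (h.trans (D.p_zero e')) (D.ι_ne_inner _ hi hie).symm
  rcases eq_or_lt_of_le hi' with rfl | hi'm
  · exact absurd (h.trans (D.p_last e')) (D.ι_ne_inner _ hi hie).symm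
  exact D.inner_inj hi hie hi'0 (by omega) h

theorem p_zero_ne_p_last (e : E) : D.p e 0 ≠ D.p e (D.m e + 1) := by
  rw [D.p_zero, D.p_last, D.ι_injective.ne_iff, Ne, ← Sym2.mk_isDiag_iff, ← D.edge_eq]
  exact G.not_isDiag_of_mem_edgeSet (D.edge e).2

theorem p_injOn (e : E) : Set.InjOn (D.p e) (Set.Iic (D.m e + 1)) := by
  intro i hi i' hi' h
  simp only [Set.mem_Iic] at hi hi'
  by_cases hinner : 0 < i ∧ i ≤ D.m e
  · exact (D.p_eq_of_inner hinner.1 hinner.2 hi' h).2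
  by_cases hinner' : 0 < i' ∧ i' ≤ D.m e
  · exact (D.p_eq_of_inner hinner'.1 hinner'.2 hi h.symm).2.symm
  obtain rfl | rfl : i = 0 ∨ i = D.m e + 1 := by omega
  all_goals obtain rfl | rfl : i' = 0 ∨ i' = D.m e + 1 := by omega
  exacts [rfl, absurd h (D.p_zero_ne_p_last e), absurd h.symm (D.p_zero_ne_p_last e), rfl]

theorem eq_of_sym2_p_eq_of_inner {e e' : E} {a b a' b' : ℕ} (ha : 0 < a) (hae : a ≤ D.m e)
    (ha' : a' ≤ D.m e' + 1) (hb' : b' ≤ D.m e' + 1)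
    (h : s(D.p e a, D.p e b) = s(D.p e' a', D.p e' b')) : e = e' := by
  rcases Sym2.mem_iff.mp (h ▸ Sym2.mem_mk_left _ _) with h' | h'
  exacts [(D.p_eq_of_inner ha hae ha' h').1, (D.p_eq_of_inner ha hae hb' h').1]

theorem eq_of_sym2_p_eq {e e' : E} {a b a' b' : ℕ} (hab : a < b) (hb : b ≤ D.m e + 1)
    (hab' : a' < b') (hb' : b' ≤ D.m e' + 1)
    (h : s(D.p e a, D.p e b) = s(D.p e' a', D.p e' b')) : e = e' ∧ a = a' ∧ b = b' := by
  have he : e = e' := by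
    by_cases ha : 0 < a
    · exact D.eq_of_sym2_p_eq_of_inner ha (by omega) (by omega) hb' h
    by_cases hbe : b ≤ D.m e
    · exact D.eq_of_sym2_p_eq_of_inner (by omega) hbe (by omega) hb' (Sym2.eq_swap.trans h)
    by_cases ha' : 0 < a'
    · exact (D.eq_of_sym2_p_eq_of_inner ha' (by omega) (by omega) hb h.symm).symm
    by_cases hbe' : b' ≤ D.m e'
    · exact (D.eq_of_sym2_p_eq_of_inner (by omega) hbe' (by omega) hb
        (Sym2.eq_swap.trans h.symm)).symm
    obtain ⟨rfl, rfl, rfl, rfl⟩ : a = 0 ∧ b = D.m e + 1 ∧ a' = 0 ∧ b' = D.m e' + 1 := by omega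
    rw [D.p_zero, D.p_last, D.p_zero, D.p_last, ← Sym2.map_mk, ← Sym2.map_mk,
      (Sym2.map.injective D.ι_injective).eq_iff, ← D.edge_eq, ← D.edge_eq] at h
    exact D.edge.injective (Subtype.ext h)
  subst he
  have hmem : ∀ {i}, i ≤ b → i ∈ Set.Iic (D.m e + 1) := fun hi => Set.mem_Iic.mpr (by omega)
  have hmem' : ∀ {i}, i ≤ b' → i ∈ Set.Iic (D.m e + 1) := fun hi => Set.mem_Iic.mpr (by omega)
  rcases Sym2.eq_iff.mp h with ⟨h1, h2⟩ | ⟨h1, h2⟩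
  · exact ⟨rfl, D.p_injOn e (hmem hab.le) (hmem' hab'.le) h1,
      D.p_injOn e (hmem le_rfl) (hmem' le_rfl) h2⟩
  · have := D.p_injOn e (hmem hab.le) (hmem' le_rfl) h1
    have := D.p_injOn e (hmem le_rfl) (hmem' hab'.le) h2
    omega

def IsBranch (x : W) : Prop :=
  (∃ v, D.ι v = x) ∨ ∃ e t, 0 < t ∧ 2 * t < D.m e ∧ D.p e (2 * t) = x

abbrev Piece : Type _ := Σ e : E, Fin (numPieces (D.m e))

def piecePath (s : D.Piece) (j : ℕ) : W := D.p s.1 (2 * s.2 + j)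

theorem piece_spec (s : D.Piece) :
    1 ≤ pieceSize (D.m s.1) s.2 ∧ pieceSize (D.m s.1) s.2 ≤ 2 ∧
      (2 * s.2 + pieceSize (D.m s.1) s.2 = D.m s.1 ∨
        pieceSize (D.m s.1) s.2 = 1 ∧ 2 * s.2 + 2 < D.m s.1) :=
  pieceSize_spec s.2.isLt

theorem isBranch_piecePath_zero (s : D.Piece) : D.IsBranch (D.piecePath s 0) := by
  rcases Nat.eq_zero_or_pos (s.2 : ℕ) with h | h
  · exact .inl ⟨(D.ends s.1).1, by simp only [piecePath, h, mul_zero, add_zero, D.p_zero]⟩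
  · have := D.piece_spec s
    exact .inr ⟨s.1, s.2, h, by omega, rfl⟩

theorem isBranch_piecePath_last (s : D.Piece) :
    D.IsBranch (D.piecePath s (pieceSize (D.m s.1) s.2 + 1)) := by
  rcases (D.piece_spec s).2.2 with h | ⟨h1, h2⟩
  · exact .inl ⟨(D.ends s.1).2, by simp only [piecePath, ← add_assoc, h, D.p_last]⟩
  · exact .inr ⟨s.1, s.2 + 1, by omega, by omega, by simp only [piecePath, h1]; ring_nf⟩

def pieceEdge (s : D.Piece) : Sym2 {x // D.IsBranch x} :=
  s(⟨_, D.isBranch_piecePath_zero s⟩, ⟨_, D.isBranch_piecePath_last s⟩)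

theorem pieceEdge_injective : Injective D.pieceEdge := by
  intro s s' h
  have h' := congrArg (Sym2.map Subtype.val) h
  have := D.piece_spec s
  have := D.piece_spec s'
  obtain ⟨he, ht, -⟩ := D.eq_of_sym2_p_eq (by omega) (by omega) (by omega) (by omega) h'
  exact Sigma.fin_ext_iff.mpr ⟨he, by omega⟩

theorem pieceEdge_not_isDiag (s : D.Piece) : ¬(D.pieceEdge s).IsDiag := by
  rw [pieceEdge, Sym2.mk_isDiag_iff, Subtype.mk.injEq]
  have := D.piece_spec s
  intro h
  have := D.p_injOn s.1 (Set.mem_Iic.mpr (by omega)) (Set.mem_Iic.mpr (by omega)) h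
  omega

def branchGraph : SimpleGraph {x // D.IsBranch x} :=
  SimpleGraph.fromEdgeSet (Set.range D.pieceEdge)

noncomputable def pieceEquiv : D.Piece ≃ D.branchGraph.edgeSet :=
  Equiv.ofBijective
    (fun s => ⟨D.pieceEdge s, by
      rw [branchGraph, SimpleGraph.edgeSet_fromEdgeSet]
      exact ⟨⟨s, rfl⟩, D.pieceEdge_not_isDiag s⟩⟩)
    ⟨fun s s' h => D.pieceEdge_injective (congrArg Subtype.val h), by
      rintro ⟨f, hf⟩
      rw [branchGraph, SimpleGraph.edgeSet_fromEdgeSet] at hf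
      obtain ⟨⟨s, rfl⟩, -⟩ := hf
      exact ⟨s, rfl⟩⟩

noncomputable def toBranchGraph : SubdivisionPaths H D.branchGraph D.Piece where
  edge := D.pieceEquiv
  ends s := (⟨_, D.isBranch_piecePath_zero s⟩, ⟨_, D.isBranch_piecePath_last s⟩)
  edge_eq _ := rfl
  ι := Subtype.val
  m s := pieceSize (D.m s.1) s.2
  p := D.piecePath
  one_le_m s := (D.piece_spec s).1
  p_zero _ := rfl
  p_last _ := rfl
  ι_injective := Subtype.val_injective
  inner_inj {s s' j j'} hj hjs hj' hjs' h := by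
    have := D.piece_spec s
    have := D.piece_spec s'
    obtain ⟨he, hi⟩ := D.inner_inj (by omega) (by omega) (by omega) (by omega) h
    exact ⟨Sigma.fin_ext_iff.mpr ⟨he, by omega⟩, by omega⟩
  ι_ne_inner := by
    rintro ⟨x, ⟨v, rfl⟩ | ⟨e, t, ht, hte, rfl⟩⟩ s j hj hjs h <;> have := D.piece_spec s
    · exact D.ι_ne_inner v (by omega) (by omega) h
    · obtain ⟨rfl, hi⟩ := D.inner_inj (by omega) (by omega) (by omega) (by omega) h
      omega
  cover x := by
    rcases D.cover x with ⟨v, rfl⟩ | ⟨e, i, hi, hie, rfl⟩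
    · exact .inl ⟨⟨_, .inl ⟨v, rfl⟩⟩, rfl⟩
    by_cases hbranch : i % 2 = 0 ∧ i < D.m e
    · exact .inl ⟨⟨_, .inr ⟨e, i / 2, by omega, by omega, congrArg (D.p e) (by omega)⟩⟩, rfl⟩
    obtain ⟨t, ht, j, hj, hij⟩ := exists_piece (D.one_le_m e) (show i - 1 ≤ D.m e by omega)
    have := pieceSize_spec ht
    exact .inr ⟨⟨e, t, ht⟩, j + 1, by omega, by dsimp only; omega,
      congrArg (D.p e) (by dsimp only; omega)⟩
  adj_iff x y := by
    rw [D.adj_iff]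
    constructor
    · rintro ⟨e, i, hi, h⟩
      obtain ⟨t, ht, j, hj, rfl⟩ := exists_piece (D.one_le_m e) hi
      exact ⟨⟨e, t, ht⟩, j, hj, h⟩
    · rintro ⟨s, j, hj, h⟩
      exact ⟨s.1, 2 * s.2 + j, by have := D.piece_spec s; omega, h⟩

theorem toBranchGraph_m (s : D.Piece) : D.toBranchGraph.m s = 1 ∨ D.toBranchGraph.m s = 2 := by
  have := D.piece_spec s
  change pieceSize _ _ = 1 ∨ pieceSize _ _ = 2
  omega

end SubdivisionPaths

end

/-- Every full subdivision of some graph is also a subdivision,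
with each edge subdivided exactly once or exactly twice, of some (possibly different)
graph: repeatedly, an edge subdivided `k ≥ 3` times in `H` can be regarded as an edge
of the graph obtained by subdividing that edge once, subdivided fewer times. -/
theorem fullSubdivision_is_one_or_two_subdivision {V W : Type}
    (G : SimpleGraph V) (H : SimpleGraph W) (hsub : IsFullSubdivisionOf H G) :
    ∃ (V' : Type) (G' : SimpleGraph V'),
      IsSubdivisionWith H G' (fun m => m = 1 ∨ m = 2) := by
  obtain ⟨D⟩ := IsSubdivisionWith.nonempty_subdivisionPaths hsub
  exact ⟨_, D.branchGraph, D.toBranchGraph.isSubdivisionWith D.toBranchGraph_m⟩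
end

section
/- For every fixed k, the number of B_k-VPG-graphs on n labeled vertices is at most n^{c·k·n} for some constant c independent of k and n (i.e., log of the number of such graphs is O(n·k·log n)). -/
/-!
Two axis-parallel segments meet iff their projections to both axes meet, and whether two
intervals meet depends only on the relative order of their endpoints. Hence the graph
represented by a family of `n` rectilinear `k`-bend paths is determined by the ranks of the
`n (k + 2)` bend-point abscissas and of the `n (k + 2)` ordinates, which leaves at most
`(n (k + 2)) ^ (2 n (k + 2))` possible graphs. For `k ≤ n` this is at most `n ^ (18 k n)`; for
`k > n` the count `2 ^ (n ^ 2)` of all graphs on `n` vertices is already small enough.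
-/

open Finset

section Segments

variable {𝕜 E F : Type*} [Semiring 𝕜] [PartialOrder 𝕜] [IsOrderedRing 𝕜]
  [AddCommMonoid E] [AddCommMonoid F] [Module 𝕜 E] [Module 𝕜 F]

theorem segment_eq_prod_of_fst_eq_or_snd_eq {a b : E × F} (h : a.1 = b.1 ∨ a.2 = b.2) :
    segment 𝕜 a b = segment 𝕜 a.1 b.1 ×ˢ segment 𝕜 a.2 b.2 := by
  obtain ⟨a₁, a₂⟩ := a
  obtain ⟨b₁, b₂⟩ := b
  rcases h with rfl | rfl
  · rw [segment_same, Set.singleton_prod, Prod.image_mk_segment_right]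
  · rw [segment_same, Set.prod_singleton, Prod.image_mk_segment_left]

end Segments

section Intervals

variable {α β ι : Type*} [LinearOrder α] [LinearOrder β]

theorem uIcc_inter_uIcc_nonempty_iff {a b c d : α} :
    (Set.uIcc a b ∩ Set.uIcc c d).Nonempty ↔ a ⊓ b ≤ c ⊔ d ∧ c ⊓ d ≤ a ⊔ b := by
  have : a ⊓ b ≤ a ⊔ b ∧ c ⊓ d ≤ c ⊔ d := ⟨inf_le_sup, inf_le_sup⟩
  simp only [Set.uIcc, Set.Icc_inter_Icc, Set.nonempty_Icc, sup_le_iff, le_inf_iff]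
  tauto

theorem uIcc_inter_uIcc_nonempty_congr {f : ι → α} {g : ι → β}
    (hfg : ∀ i j, f i ≤ f j ↔ g i ≤ g j) (a b c d : ι) :
    (Set.uIcc (f a) (f b) ∩ Set.uIcc (f c) (f d)).Nonempty ↔
      (Set.uIcc (g a) (g b) ∩ Set.uIcc (g c) (g d)).Nonempty := by
  simp only [uIcc_inter_uIcc_nonempty_iff, inf_le_iff, le_sup_iff, hfg]

end Intervals

section Rank

variable {ι α : Type*} [Fintype ι] [LinearOrder α]

def orderRank (f : ι → α) (i : ι) : Fin (Fintype.card ι) :=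
  ⟨#(univ.filter (f · < f i)), card_lt_univ_of_notMem (x := i) (by simp)⟩

theorem orderRank_le_orderRank_iff (f : ι → α) (i j : ι) :
    orderRank f i ≤ orderRank f j ↔ f i ≤ f j := by
  refine ⟨fun h => ?_, fun h =>
    card_le_card (monotone_filter_right _ fun _ _ ha => ha.trans_le h)⟩
  by_contra! hji
  have hss : univ.filter (f · < f j) ⊂ univ.filter (f · < f i) :=
    (ssubset_iff_of_subset (monotone_filter_right _ fun _ _ ha => ha.trans hji)).2
      ⟨j, by simpa using hji, by simp⟩
  exact (card_lt_card hss).not_ge h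

theorem le_iff_le_of_orderRank_eq {f g : ι → α} (h : orderRank f = orderRank g) (i j : ι) :
    f i ≤ f j ↔ g i ≤ g j := by
  rw [← orderRank_le_orderRank_iff f, ← orderRank_le_orderRank_iff g, h]

end Rank

theorem Set.ncard_le_card_of_encoding {α γ : Type*} [Finite γ] {s : Set α} (R : α → γ → Prop)
    (hR : ∀ a ∈ s, ∃ c, R a c) (hinj : ∀ a ∈ s, ∀ b ∈ s, ∀ c, R a c → R b c → a = b) :
    s.ncard ≤ Nat.card γ := by
  choose code hcode using hR
  have : Function.Injective fun a : s => code a a.2 := fun a b h =>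
    Subtype.ext (hinj _ a.2 _ b.2 _ (hcode a a.2) (by simpa [h] using hcode b b.2))
  simpa using Nat.card_le_card_of_injective _ this

theorem Nat.card_simpleGraph_le {V : Type*} [Finite V] :
    Nat.card (SimpleGraph V) ≤ 2 ^ (Nat.card V * Nat.card V) := by
  have := Nat.card_le_card_of_injective _ (SimpleGraph.adj_injective (V := V))
  simpa [Nat.card_fun, ← pow_mul] using this

theorem bendPathSet_inter_nonempty_iff {k : ℕ} {p q : ℕ → ℝ × ℝ} (hp : IsRectilinear k p)
    (hq : IsRectilinear k q) :
    (BendPathSet k p ∩ BendPathSet k q).Nonempty ↔ ∃ i < k + 1, ∃ j < k + 1,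
      (Set.uIcc (p i).1 (p (i + 1)).1 ∩ Set.uIcc (q j).1 (q (j + 1)).1).Nonempty ∧
      (Set.uIcc (p i).2 (p (i + 1)).2 ∩ Set.uIcc (q j).2 (q (j + 1)).2).Nonempty := by
  rw [BendPathSet, BendPathSet, Set.iUnion₂_inter]
  simp only [Set.inter_iUnion₂, Set.nonempty_iUnion, mem_range, exists_prop]
  refine exists_congr fun i => and_congr_right fun hi => exists_congr fun j => and_congr_right
    fun hj => ?_
  rw [segment_eq_prod_of_fst_eq_or_snd_eq (hp i hi), segment_eq_prod_of_fst_eq_or_snd_eq (hq j hj),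
    Set.prod_inter_prod, Set.prod_nonempty_iff, segment_eq_uIcc, segment_eq_uIcc, segment_eq_uIcc,
    segment_eq_uIcc]

section Profile

variable {V : Type*} [Fintype V] {k : ℕ}

def bendPoints (k : ℕ) (p : V → ℕ → ℝ × ℝ) (x : V × Fin (k + 2)) : ℝ × ℝ := p x.1 x.2

noncomputable def rankProfile (k : ℕ) (p : V → ℕ → ℝ × ℝ) :
    (V × Fin (k + 2) → Fin (Fintype.card (V × Fin (k + 2)))) ×
      (V × Fin (k + 2) → Fin (Fintype.card (V × Fin (k + 2)))) :=
  (orderRank fun x => (bendPoints k p x).1, orderRank fun x => (bendPoints k p x).2)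

theorem bendPathSet_inter_nonempty_congr {p q : V → ℕ → ℝ × ℝ}
    (hp : ∀ v, IsRectilinear k (p v)) (hq : ∀ v, IsRectilinear k (q v))
    (hpq : rankProfile k p = rankProfile k q) (u v : V) :
    (BendPathSet k (p u) ∩ BendPathSet k (p v)).Nonempty ↔
      (BendPathSet k (q u) ∩ BendPathSet k (q v)).Nonempty := by
  have hx := le_iff_le_of_orderRank_eq (congrArg Prod.fst hpq)
  have hy := le_iff_le_of_orderRank_eq (congrArg Prod.snd hpq)
  rw [bendPathSet_inter_nonempty_iff (hp u) (hp v), bendPathSet_inter_nonempty_iff (hq u) (hq v)]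
  refine exists_congr fun i => and_congr_right fun hi => exists_congr fun j => and_congr_right
    fun hj => ?_
  let ui : V × Fin (k + 2) := (u, ⟨i, by omega⟩)
  let ui' : V × Fin (k + 2) := (u, ⟨i + 1, by omega⟩)
  let vj : V × Fin (k + 2) := (v, ⟨j, by omega⟩)
  let vj' : V × Fin (k + 2) := (v, ⟨j + 1, by omega⟩)
  exact and_congr (uIcc_inter_uIcc_nonempty_congr hx ui ui' vj vj')
    (uIcc_inter_uIcc_nonempty_congr hy ui ui' vj vj')

theorem ncard_setOf_isBkVPG_le (k : ℕ) :
    {G : SimpleGraph V | IsBkVPG k G}.ncard ≤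
      (Fintype.card V * (k + 2)) ^ (2 * (Fintype.card V * (k + 2))) := by
  let IsRankProfileOf (G : SimpleGraph V) c := ∃ p, (∀ v, IsRectilinear k (p v)) ∧
    (∀ u v, u ≠ v → (G.Adj u v ↔ (BendPathSet k (p u) ∩ BendPathSet k (p v)).Nonempty)) ∧
    rankProfile k p = c
  have hex : ∀ G ∈ {G : SimpleGraph V | IsBkVPG k G}, ∃ c, IsRankProfileOf G c :=
    fun _ ⟨p, hp, hG⟩ => ⟨_, p, hp, hG, rfl⟩
  have huniq : ∀ G₁ ∈ {G : SimpleGraph V | IsBkVPG k G}, ∀ G₂ ∈ {G : SimpleGraph V | IsBkVPG k G},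
      ∀ c, IsRankProfileOf G₁ c → IsRankProfileOf G₂ c → G₁ = G₂ := by
    rintro G₁ - G₂ - c ⟨p, hp, hG₁, rfl⟩ ⟨q, hq, hG₂, hpq⟩
    ext u v
    by_cases huv : u = v
    · simp [huv]
    · rw [hG₁ u v huv, hG₂ u v huv, bendPathSet_inter_nonempty_congr hp hq hpq.symm]
  refine (Set.ncard_le_card_of_encoding IsRankProfileOf hex huniq).trans_eq ?_
  simp [Nat.card_fun, ← pow_add, two_mul]

end Profile

/-- There is a constant `c`, independent of `k` and `n`, such that
for every `k ≥ 1` the number of `B_k`-VPG-graphs on `n` labeled vertices is at most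
`n ^ (c * k * n)` (i.e. its logarithm is `O(n k log n)`). -/
theorem count_BkVPG_graphs_le : ∃ c : ℕ, ∀ k n : ℕ, 1 ≤ k →
    {G : SimpleGraph (Fin n) | IsBkVPG k G}.ncard ≤ n ^ (c * k * n) := by
  refine ⟨18, fun k n hk => ?_⟩
  obtain hn | hn := lt_or_ge n 2
  · have : Subsingleton (Fin n) := Fin.subsingleton_iff_le_one.2 (by omega)
    calc _ ≤ 1 := Set.ncard_le_one_of_subsingleton _
      _ ≤ n ^ (18 * k * n) := by interval_cases n <;> simp
  obtain hkn | hnk := le_or_gt k n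
  · have hbase : n * (k + 2) ≤ n ^ 3 := by
      rw [pow_succ']
      exact Nat.mul_le_mul_left n (by nlinarith)
    calc _ ≤ (n * (k + 2)) ^ (2 * (n * (k + 2))) := by
          simpa using ncard_setOf_isBkVPG_le (V := Fin n) k
      _ ≤ (n ^ 3) ^ (2 * (n * (k + 2))) := Nat.pow_le_pow_left hbase _
      _ ≤ (n ^ 3) ^ (6 * (k * n)) := Nat.pow_le_pow_right (by positivity) (by nlinarith)
      _ = n ^ (18 * k * n) := by ring
  · calc _ ≤ Nat.card (SimpleGraph (Fin n)) := Set.ncard_le_card _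
      _ ≤ 2 ^ (n * n) := by simpa using Nat.card_simpleGraph_le (V := Fin n)
      _ ≤ n ^ (n * n) := Nat.pow_le_pow_left hn _
      _ ≤ n ^ (18 * k * n) := Nat.pow_le_pow_right (by omega) (by nlinarith)
end

section
/- The cocomparability graph of every poset of dimension at most k+1 is a B_k-VPG-graph. -/
/-- The cocomparability graph of a partial order: two distinct elements are adjacent
iff they are incomparable. -/
def cocompGraph {α : Type*} (P : PartialOrder α) : SimpleGraph α :=
  SimpleGraph.fromRel (fun a b => ¬ P.le a b ∧ ¬ P.le b a)

/-- The partial order `P` has dimension at most `t`: its order relation is the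
intersection of `t` linear orders on the ground set. -/
def HasDimAtMost {α : Type*} (P : PartialOrder α) (t : ℕ) : Prop :=
  ∃ r : Fin t → α → α → Prop, (∀ i, IsLinearOrder α (r i)) ∧
    ∀ a b : α, P.le a b ↔ ∀ i, r i a b

/-!
Realize `P` by `k + 1` real coordinate functions `g₀, …, g_k` (normalized ranks in the linear
extensions). Vertex `v` becomes a staircase whose `i`-th segment (horizontal for even `i`,
vertical for odd `i`) lies at a level determined by `gᵢ v`, the levels of different `i` lying in
disjoint bands. Two staircases can then meet only in segments `i`, `i + 1`, and these cross iff
the two staircases are ordered the same way at both levels. Reversing every odd coordinate turns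
this into: `gᵢ` and `gᵢ₊₁` order `u` and `v` differently, and such an `i` exists iff `u` and `v`
are incomparable.
-/

open Set Function

theorem exists_abs_lt_one_rel_iff_le {α : Type*} [Finite α] (r : α → α → Prop)
    [IsLinearOrder α r] : ∃ f : α → ℝ, (∀ a, |f a| < 1) ∧ ∀ a b, r a b ↔ f a ≤ f b := by
  let rank : α → ℕ := fun a => {c | r c a}.ncard
  have rank_le_of_rel {a b : α} (hab : r a b) : rank a ≤ rank b :=
    ncard_le_ncard fun c hc => _root_.trans hc hab
  have rank_lt_of_not_rel {a b : α} (hab : ¬ r a b) : rank b < rank a := by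
    have hba : r b a := (total_of r a b).resolve_left hab
    refine ncard_lt_ncard (ssubset_iff_subset_ne.2 ⟨fun c hc => _root_.trans hc hba, ?_⟩)
    exact fun h => hab (h.symm ▸ refl_of r a : a ∈ {c | r c b})
  have hN : (0 : ℝ) < Nat.card α + 1 := by positivity
  refine ⟨fun a => rank a / (Nat.card α + 1), fun a => ?_, fun a b => ?_⟩
  · rw [abs_of_nonneg (by positivity), div_lt_one hN]
    exact_mod_cast Nat.lt_succ_of_le (ncard_le_card _)
  · rw [div_le_div_iff_of_pos_right hN, Nat.cast_le]
    exact ⟨rank_le_of_rel, fun h => by_contra fun hab => (rank_lt_of_not_rel hab).not_ge h⟩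

theorem HasDimAtMost.exists_coords {α : Type*} [Finite α] {P : PartialOrder α} {t : ℕ}
    (h : HasDimAtMost P t) :
    ∃ g : ℕ → α → ℝ, (∀ i a, |g i a| < 1) ∧ (∀ i < t, Injective (g i)) ∧
      ∀ a b, P.le a b ↔ ∀ i < t, g i a ≤ g i b := by
  obtain ⟨r, hr, hP⟩ := h
  choose f hf_abs hf_le using fun i => @exists_abs_lt_one_rel_iff_le α _ (r i) (hr i)
  refine ⟨fun i => if hi : i < t then f ⟨i, hi⟩ else 0, fun i a => ?_, fun i hi a b hab => ?_,
    fun a b => ?_⟩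
  · dsimp only
    split_ifs
    exacts [hf_abs _ a, by simp]
  · simp only [dif_pos hi] at hab
    have := hr ⟨i, hi⟩
    exact antisymm ((hf_le _ a b).2 hab.le) ((hf_le _ b a).2 hab.ge)
  · simp only [hP, Fin.forall_iff, hf_le]
    exact forall₂_congr fun i hi => by simp only [dif_pos hi]

theorem exists_lt_not_iff_succ_iff {s : ℕ → Prop} {k : ℕ} :
    (∃ m < k, ¬(s m ↔ s (m + 1))) ↔ (∃ a ≤ k, ¬ s a) ∧ ∃ b ≤ k, s b := by
  constructor
  · rintro ⟨m, hm, h⟩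
    by_cases hs : s m
    · exact ⟨⟨m + 1, hm, by tauto⟩, m, hm.le, hs⟩
    · exact ⟨⟨m, hm.le, hs⟩, m + 1, hm, by tauto⟩
  · rintro ⟨⟨a, ha, hsa⟩, b, hb, hsb⟩
    by_contra! hconst
    have hs0 : ∀ m ≤ k, (s m ↔ s 0) := by
      intro m hm
      induction m with
      | zero => rfl
      | succ m ih => exact (hconst m hm).symm.trans (ih (by omega))
    exact hsa ((hs0 a ha).2 ((hs0 b hb).1 hsb))

theorem cocompGraph_adj_iff_of_coords {α : Type*} {P : PartialOrder α} {g : ℕ → α → ℝ} {t : ℕ}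
    (hP : ∀ a b, P.le a b ↔ ∀ i < t, g i a ≤ g i b) {u v : α} (huv : u ≠ v) :
    (cocompGraph P).Adj u v ↔ (∃ a < t, g a v < g a u) ∧ ∃ b < t, g b u < g b v := by
  simp only [cocompGraph, SimpleGraph.fromRel_adj, hP]
  push Not
  tauto

namespace VPG

/-- The point at level `c` (the fixed coordinate) and position `x` on a staircase segment of
parity `i`. -/
def orient (i : ℕ) (c x : ℝ) : ℝ × ℝ := if Even i then (x, c) else (c, x)

theorem orient_succ (i : ℕ) (c x : ℝ) : orient (i + 1) c x = orient i x c := by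
  by_cases hi : Even i <;> simp [orient, Nat.even_add_one, hi]

theorem segment_orient (i : ℕ) (c a b : ℝ) :
    segment ℝ (orient i c a) (orient i c b) = orient i c '' uIcc a b := by
  rw [← segment_eq_uIcc]
  by_cases hi : Even i
  · have : orient i c = fun x => (x, c) := funext fun x => if_pos hi
    rw [this, Prod.image_mk_segment_left]
  · have : orient i c = fun x => (c, x) := funext fun x => if_neg hi
    rw [this, Prod.image_mk_segment_right]

theorem eq_of_orient_eq_of_even_iff {i j : ℕ} {c c' x y : ℝ}
    (h : orient i c x = orient j c' y) (hij : Even i ↔ Even j) : c = c' := by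
  by_cases hi : Even i <;> by_cases hj : Even j <;> simp_all [orient, Prod.ext_iff]

theorem eq_of_orient_eq_of_not_even_iff {i j : ℕ} {c c' x y : ℝ}
    (h : orient i c x = orient j c' y) (hij : ¬(Even i ↔ Even j)) : c = y ∧ x = c' := by
  by_cases hi : Even i <;> by_cases hj : Even j <;> simp_all [orient, Prod.ext_iff]

def stair (ℓ : ℕ → ℝ) (i : ℕ) : ℝ × ℝ := orient i (ℓ (i + 1)) (ℓ i)

theorem segment_stair (ℓ : ℕ → ℝ) (i : ℕ) :
    segment ℝ (stair ℓ i) (stair ℓ (i + 1)) = orient i (ℓ (i + 1)) '' uIcc (ℓ i) (ℓ (i + 2)) := by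
  rw [stair, stair, orient_succ, segment_orient]

theorem isRectilinear_stair (k : ℕ) (ℓ : ℕ → ℝ) : IsRectilinear k (stair ℓ) := by
  intro i _
  by_cases hi : Even i <;> simp [stair, orient, Nat.even_add_one, hi]

theorem mem_bendPathSet_stair {k : ℕ} {ℓ : ℕ → ℝ} {z : ℝ × ℝ} :
    z ∈ BendPathSet k (stair ℓ) ↔
      ∃ i ≤ k, ∃ x ∈ uIcc (ℓ i) (ℓ (i + 2)), orient i (ℓ (i + 1)) x = z := by
  simp [BendPathSet, segment_stair]

def IsBanded {α : Type*} (ℓ : α → ℕ → ℝ) : Prop := ∀ u v ⦃m m' : ℕ⦄, m < m' → ℓ v m' < ℓ u m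

section Banded

variable {α : Type*} {ℓ : α → ℕ → ℝ} {k : ℕ} {u v : α}

theorem IsBanded.le_of_le (hℓ : IsBanded ℓ) {m m' : ℕ} (h : ℓ u m ≤ ℓ v m') : m' ≤ m := by
  by_contra! hm
  exact (hℓ u v hm).not_ge h

theorem IsBanded.uIcc_eq (hℓ : IsBanded ℓ) (v : α) (i : ℕ) :
    uIcc (ℓ v i) (ℓ v (i + 2)) = Icc (ℓ v (i + 2)) (ℓ v i) :=
  uIcc_of_ge (hℓ v v (by omega)).le

theorem IsBanded.stair_inter_nonempty (hℓ : IsBanded ℓ) {m : ℕ} (hm : m < k)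
    (h₁ : ℓ u (m + 1) ≤ ℓ v (m + 1)) (h₂ : ℓ u (m + 2) ≤ ℓ v (m + 2)) :
    (BendPathSet k (stair (ℓ u)) ∩ BendPathSet k (stair (ℓ v))).Nonempty := by
  refine ⟨orient m (ℓ u (m + 1)) (ℓ v (m + 2)), mem_bendPathSet_stair.2 ?_,
    mem_bendPathSet_stair.2 ?_⟩
  · refine ⟨m, hm.le, ℓ v (m + 2), ?_, rfl⟩
    rw [hℓ.uIcc_eq]
    exact ⟨h₂, (hℓ u v (by omega)).le⟩
  · refine ⟨m + 1, hm, ℓ u (m + 1), ?_, orient_succ _ _ _⟩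
    rw [hℓ.uIcc_eq]
    exact ⟨(hℓ u v (by omega)).le, h₁⟩

theorem IsBanded.succ_eq_and_le_of_mem_uIcc (hℓ : IsBanded ℓ) {i j : ℕ} (hij : i < j)
    (hu : ℓ u (i + 1) ∈ uIcc (ℓ v j) (ℓ v (j + 2)))
    (hv : ℓ v (j + 1) ∈ uIcc (ℓ u i) (ℓ u (i + 2))) :
    j = i + 1 ∧ ℓ u (i + 1) ≤ ℓ v (i + 1) ∧ ℓ u (i + 2) ≤ ℓ v (i + 2) := by
  rw [hℓ.uIcc_eq] at hu hv
  obtain rfl : j = i + 1 := le_antisymm (hℓ.le_of_le hu.2) hij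
  exact ⟨rfl, hu.2, hv.1⟩

theorem IsBanded.exists_of_stair_inter_nonempty (hℓ : IsBanded ℓ)
    (hne : ∀ m ≤ k, ℓ u (m + 1) ≠ ℓ v (m + 1))
    (h : (BendPathSet k (stair (ℓ u)) ∩ BendPathSet k (stair (ℓ v))).Nonempty) :
    ∃ m < k, (ℓ u (m + 1) ≤ ℓ v (m + 1) ∧ ℓ u (m + 2) ≤ ℓ v (m + 2)) ∨
      (ℓ v (m + 1) ≤ ℓ u (m + 1) ∧ ℓ v (m + 2) ≤ ℓ u (m + 2)) := by
  obtain ⟨z, hu, hv⟩ := h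
  obtain ⟨i, hi, x, hx, rfl⟩ := mem_bendPathSet_stair.1 hu
  obtain ⟨j, hj, y, hy, hyx⟩ := mem_bendPathSet_stair.1 hv
  by_cases hpar : Even j ↔ Even i
  · have hlev := eq_of_orient_eq_of_even_iff hyx hpar
    obtain rfl : j = i := by
      have := hℓ.le_of_le hlev.le
      have := hℓ.le_of_le hlev.ge
      omega
    exact absurd hlev.symm (hne j hj)
  · obtain ⟨rfl, rfl⟩ := eq_of_orient_eq_of_not_even_iff hyx hpar
    rcases lt_or_gt_of_ne (show i ≠ j by rintro rfl; exact hpar Iff.rfl) with hij | hij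
    · obtain ⟨rfl, h⟩ := hℓ.succ_eq_and_le_of_mem_uIcc hij hy hx
      exact ⟨i, by omega, Or.inl h⟩
    · obtain ⟨rfl, h⟩ := hℓ.succ_eq_and_le_of_mem_uIcc hij hx hy
      exact ⟨j, by omega, Or.inr h⟩

theorem IsBanded.stair_inter_nonempty_iff (hℓ : IsBanded ℓ)
    (hne : ∀ m ≤ k, ℓ u (m + 1) ≠ ℓ v (m + 1)) :
    (BendPathSet k (stair (ℓ u)) ∩ BendPathSet k (stair (ℓ v))).Nonempty ↔
      ∃ m < k, (ℓ u (m + 1) < ℓ v (m + 1) ↔ ℓ u (m + 2) < ℓ v (m + 2)) := by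
  constructor
  · intro h
    obtain ⟨m, hm, h | h⟩ := hℓ.exists_of_stair_inter_nonempty hne h
    · exact ⟨m, hm, iff_of_true (h.1.lt_of_ne (hne m (by omega)))
        (h.2.lt_of_ne (hne (m + 1) (by omega)))⟩
    · exact ⟨m, hm, iff_of_false h.1.not_gt h.2.not_gt⟩
  · rintro ⟨m, hm, h⟩
    by_cases h₁ : ℓ u (m + 1) < ℓ v (m + 1)
    · exact hℓ.stair_inter_nonempty hm h₁.le (h.1 h₁).le
    · rw [inter_comm]
      exact hℓ.stair_inter_nonempty hm (not_lt.1 h₁) (not_lt.1 (mt h.2 h₁))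

end Banded

/-- Level `m + 1` lies in the band `(-2m - 1, -2m + 1)`. The sign `(-1) ^ m` reverses every
other coordinate, so that consecutive segments of two staircases cross exactly when the two
coordinates order the vertices differently. -/
def stairLevel (c : ℕ → ℝ) : ℕ → ℝ
  | 0 => 2
  | m + 1 => (-1) ^ m * c m - 2 * m

theorem isBanded_stairLevel {α : Type*} {g : ℕ → α → ℝ} (hg : ∀ m v, |g m v| < 1) :
    IsBanded fun v => stairLevel (g · v) := by
  have hsign (w : α) (m : ℕ) : |(-1) ^ m * g m w| < 1 := by simpa [abs_mul] using hg m w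
  intro u v m m' hm
  obtain ⟨b, rfl⟩ : ∃ b, m' = b + 1 := ⟨m' - 1, by omega⟩
  have hv := abs_lt.1 (hsign v b)
  cases m with
  | zero =>
    have : (0 : ℝ) ≤ b := b.cast_nonneg
    simp only [stairLevel]
    linarith
  | succ a =>
    have hu := abs_lt.1 (hsign u a)
    have : (a : ℝ) + 1 ≤ b := by exact_mod_cast (by omega : a + 1 ≤ b)
    simp only [stairLevel]
    linarith

theorem stairLevel_succ_ne {c c' : ℕ → ℝ} {m : ℕ} (h : c m ≠ c' m) :
    stairLevel c (m + 1) ≠ stairLevel c' (m + 1) := by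
  simpa [stairLevel] using h

theorem stairLevel_succ_lt_iff {c c' : ℕ → ℝ} {m : ℕ} (h : c m ≠ c' m) :
    stairLevel c (m + 1) < stairLevel c' (m + 1) ↔ (c m < c' m ↔ Even m) := by
  rcases Nat.even_or_odd m with hm | hm
  · simp [stairLevel, hm.neg_one_pow, hm]
  · simp [stairLevel, hm.neg_one_pow, Nat.not_even_iff_odd.2 hm, h.symm.le_iff_lt]

end VPG

open VPG

/-- The cocomparability graph of every poset of dimension at most
`k + 1` is a `B_k`-VPG-graph. -/
theorem cocomparability_of_dim_le_isBkVPG (k n : ℕ) (P : PartialOrder (Fin n))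
    (hdim : HasDimAtMost P (k + 1)) : IsBkVPG k (cocompGraph P) := by
  obtain ⟨g, hg_abs, hg_inj, hP⟩ := hdim.exists_coords
  refine ⟨fun v => stair (stairLevel (g · v)), fun v => isRectilinear_stair k _,
    fun u v huv => ?_⟩
  have hne (m : ℕ) (hm : m ≤ k) : g m u ≠ g m v := (hg_inj m (by omega)).ne huv
  have hflip (m : ℕ) (hm : m < k) :
      (stairLevel (g · u) (m + 1) < stairLevel (g · v) (m + 1) ↔
        stairLevel (g · u) (m + 2) < stairLevel (g · v) (m + 2)) ↔
      ¬(g m u < g m v ↔ g (m + 1) u < g (m + 1) v) := by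
    rw [stairLevel_succ_lt_iff (hne m hm.le), stairLevel_succ_lt_iff (hne (m + 1) hm),
      Nat.even_add_one]
    tauto
  beta_reduce
  rw [(isBanded_stairLevel hg_abs).stair_inter_nonempty_iff
      fun m hm => stairLevel_succ_ne (hne m hm),
    exists_congr fun m => and_congr_right (hflip m), exists_lt_not_iff_succ_iff,
    cocompGraph_adj_iff_of_coords hP huv]
  simp only [Nat.lt_succ_iff]
  refine and_congr (exists_congr fun a => and_congr_right fun ha => ?_) Iff.rfl
  exact ⟨fun h => h.not_gt, fun h => (not_lt.1 h).lt_of_ne (hne a ha).symm⟩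
end
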